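/- arXiv:2206.15201 — 2 statements merged into one kernel-verified Lean document; each statement's English description precedes it below -/
import Mathlib

section
/- Consider an instance of the MST problem under explorable uncertainty with predictions and unique T_L = T_U, and a cycle C_i such that all cycles C_j with j < i are prediction mandatory free. Let l_i be the edge with the highest upper limit in C_i ∖ {f_i}, and suppose ŵ_{f_i} ∈ I_{l_i} and ŵ_{l_i} ∈ I_{f_i}. Then {f_i, l_i} is a witness set, and either both f_i and l_i are mandatory or h→({f_i, l_i}) ≥ 1. -/
/-!
Common framework: the minimum spanning tree problem under explorable
uncertainty with (untrusted) predictions.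
-/

open scoped BigOperators
open scoped Classical

noncomputable section

/-- An instance of the MST problem under explorable uncertainty with predictions:
a connected (multi)graph whose edges carry uncertainty intervals (open `(L,U)` for
non-trivial edges, i.e. `L < U`, and the singleton `{L}` for trivial edges, i.e. `L = U`)
together with predicted values `pw e` lying in the intervals. -/
structure UncGraph where
  V : Type
  E : Type
  fintV : Fintype V
  fintE : Fintype E
  decV : DecidableEq V
  decE : DecidableEq E
  ends : E → Sym2 V
  conn : ∀ u v : V, Relation.ReflTransGen (fun a b => ∃ e : E, ends e = s(a, b)) u v
  L : E → ℝ
  U : E → ℝ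
  LU : ∀ e, L e ≤ U e
  pw : E → ℝ
  pw_mem : ∀ e, (L e = U e ∧ pw e = L e) ∨ (L e < pw e ∧ pw e < U e)

attribute [instance] UncGraph.fintV UncGraph.fintE UncGraph.decV UncGraph.decE

namespace UncGraph

variable (G : UncGraph)

/-- The uncertainty interval of an edge: the open interval `(L e, U e)` for a
non-trivial edge, the singleton `{L e}` for a trivial edge (`L e = U e`). -/
def I (e : G.E) : Set ℝ :=
  {x | (G.L e = G.U e ∧ x = G.L e) ∨ (G.L e < x ∧ x < G.U e)}

/-- A trivial edge: its interval is a singleton. -/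
def TrivialEdge (e : G.E) : Prop := G.L e = G.U e

/-- A non-trivial edge: its interval is a nonempty open interval. -/
def NontrivialEdge (e : G.E) : Prop := G.L e < G.U e

/-- `w` is a valid realization of true edge weights. -/
def Valid (w : G.E → ℝ) : Prop := ∀ e, w e ∈ G.I e

/-- Connectivity of two vertices using only edges from `S`. -/
def ConnectsVia (S : Finset G.E) (u v : G.V) : Prop :=
  Relation.ReflTransGen (fun a b => ∃ e ∈ S, G.ends e = s(a, b)) u v

/-- `S` is a spanning tree: it connects all vertices and has `|V| - 1` edges. -/
def IsSpanningTree (S : Finset G.E) : Prop :=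
  (∀ u v : G.V, G.ConnectsVia S u v) ∧ S.card + 1 = Fintype.card G.V

/-- `T` is a minimum spanning tree with respect to the weight function `wf`. -/
def IsMST (wf : G.E → ℝ) (T : Finset G.E) : Prop :=
  G.IsSpanningTree T ∧ ∀ T', G.IsSpanningTree T' → ∑ e ∈ T, wf e ≤ ∑ e ∈ T', wf e

/-- `wf` agrees with the true values `w` on the queried set `Q` and lies in the
uncertainty intervals elsewhere. -/
def Compatible (w : G.E → ℝ) (Q : Finset G.E) (wf : G.E → ℝ) : Prop :=
  (∀ e ∈ Q, wf e = w e) ∧ ∀ e, wf e ∈ G.I e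

/-- The query set `Q` verifies `T`: `T` is an MST for every weight function
compatible with the revealed values. -/
def Verifies (w : G.E → ℝ) (Q T : Finset G.E) : Prop :=
  ∀ wf, G.Compatible w Q wf → G.IsMST wf T

/-- `Q` is a feasible query set for true values `w`. -/
def Feasible (w : G.E → ℝ) (Q : Finset G.E) : Prop :=
  ∃ T, G.Verifies w Q T

/-- The minimum cardinality of a feasible query set. -/
def optCost (w : G.E → ℝ) : ℕ :=
  sInf {n | ∃ Q, G.Feasible w Q ∧ Q.card = n}

/-- `Q` is an optimal (minimum-cardinality feasible) query set. -/
def IsOptimal (w : G.E → ℝ) (Q : Finset G.E) : Prop :=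
  G.Feasible w Q ∧ ∀ Q', G.Feasible w Q' → Q.card ≤ Q'.card

/-- An edge is mandatory if it belongs to every feasible query set. -/
def Mandatory (w : G.E → ℝ) (e : G.E) : Prop :=
  ∀ Q, G.Feasible w Q → e ∈ Q

/-- A witness set intersects every feasible query set. -/
def IsWitnessSet (w : G.E → ℝ) (W : Finset G.E) : Prop :=
  ∀ Q, G.Feasible w Q → ∃ e ∈ W, e ∈ Q

/-- An edge is prediction mandatory if it is mandatory under the assumption that
all queries return the predicted values. -/
def PredMandatory (e : G.E) : Prop := G.Mandatory G.pw e

/-- An instance is prediction mandatory free if it has no prediction mandatory edge. -/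
def PredMandatoryFree : Prop := ∀ e, ¬ G.PredMandatory e

/-- Hop-distance indicator `k_{e'}(e)`: `0` if the prediction `p e` has the same
relation to the interval `I e'` as the true value `w e` (both `≤ L e'`, both
`≥ U e'`, or both strictly inside), and `1` otherwise. -/
def kErr (p w : G.E → ℝ) (e e' : G.E) : ℕ :=
  if (p e ≤ G.L e' ∧ w e ≤ G.L e') ∨ (G.U e' ≤ p e ∧ G.U e' ≤ w e) ∨
      (G.L e' < p e ∧ p e < G.U e' ∧ G.L e' < w e ∧ w e < G.U e')
  then 0 else 1

/-- `h→(e) = Σ_{e' ≠ e} k_{e'}(e)`. -/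
def hright (p w : G.E → ℝ) (e : G.E) : ℕ :=
  ∑ e' ∈ Finset.univ.erase e, G.kErr p w e e'

/-- `h←(e) = Σ_{e' ≠ e} k_e(e')`. -/
def hleft (p w : G.E → ℝ) (e : G.E) : ℕ :=
  ∑ e' ∈ Finset.univ.erase e, G.kErr p w e' e

/-- `h→(E') = Σ_{e ∈ E'} h→(e)`. -/
def hrightSum (p w : G.E → ℝ) (S : Finset G.E) : ℕ := ∑ e ∈ S, G.hright p w e

/-- `h←(E') = Σ_{e ∈ E'} h←(e)`. -/
def hleftSum (p w : G.E → ℝ) (S : Finset G.E) : ℕ := ∑ e ∈ S, G.hleft p w e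

/-- The hop distance of prediction `p` for realization `w`. -/
def hopDist (p w : G.E → ℝ) : ℕ := ∑ e, G.hright p w e

/-- The hop distance `k_h` of the instance's predictions for realization `w`. -/
def khop (w : G.E → ℝ) : ℕ := G.hopDist G.pw w

/-- Lower-limit weights `w^L`: `L e + ε` for non-trivial edges, the known value
for trivial edges. -/
def lowerWeight (ε : ℝ) (e : G.E) : ℝ := if G.L e = G.U e then G.L e else G.L e + ε

/-- Upper-limit weights `w^U`: `U e - ε` for non-trivial edges, the known value
for trivial edges. -/
def upperWeight (ε : ℝ) (e : G.E) : ℝ := if G.L e = G.U e then G.L e else G.U e - ε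

/-- `T` is a lower limit tree: an MST for `w^L` for all sufficiently small `ε > 0`. -/
def IsLowerLimitTree (T : Finset G.E) : Prop :=
  ∃ ε₀ > (0 : ℝ), ∀ ε : ℝ, 0 < ε → ε < ε₀ → G.IsMST (G.lowerWeight ε) T

/-- `T` is an upper limit tree: an MST for `w^U` for all sufficiently small `ε > 0`. -/
def IsUpperLimitTree (T : Finset G.E) : Prop :=
  ∃ ε₀ > (0 : ℝ), ∀ ε : ℝ, 0 < ε → ε < ε₀ → G.IsMST (G.upperWeight ε) T

/-- `T` is simultaneously the unique lower limit tree and the unique upper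
limit tree (`T_L = T_U`, both unique). -/
def UniqueLimitTrees (T : Finset G.E) : Prop :=
  G.IsLowerLimitTree T ∧ G.IsUpperLimitTree T ∧
  (∀ T', G.IsLowerLimitTree T' → T' = T) ∧
  (∀ T', G.IsUpperLimitTree T' → T' = T)

/-- Number of edge-ends of `S` incident to `v` (loops count twice). -/
def incCount (S : Finset G.E) (v : G.V) : ℕ :=
  ∑ e ∈ S, (if G.ends e = s(v, v) then 2 else if v ∈ G.ends e then 1 else 0)

/-- `S` forms a single cycle: nonempty, every vertex has degree `0` or `2`,
and the support is connected. -/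
def IsCycle (S : Finset G.E) : Prop :=
  S.Nonempty ∧ (∀ v, G.incCount S v = 0 ∨ G.incCount S v = 2) ∧
  ∀ u v, G.incCount S u ≠ 0 → G.incCount S v ≠ 0 → G.ConnectsVia S u v

/-- `C` is the cycle closed by adding the edge `f` to the tree `T`. -/
def IsCycleOf (T : Finset G.E) (f : G.E) (C : Finset G.E) : Prop :=
  G.IsCycle C ∧ f ∈ C ∧ C ⊆ insert f T

/-- `e'` lies in the cut `X_e` between the two components of `T \ {e}`. -/
def InCut (T : Finset G.E) (e e' : G.E) : Prop :=
  ∀ u v : G.V, G.ends e' = s(u, v) → ¬ G.ConnectsVia (T.erase e) u v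

/-- `S` is a path between the (distinct) vertices `a` and `b`. -/
def IsPathBetween (S : Finset G.E) (a b : G.V) : Prop :=
  a ≠ b ∧ G.incCount S a = 1 ∧ G.incCount S b = 1 ∧
  (∀ v, v ≠ a → v ≠ b → G.incCount S v = 0 ∨ G.incCount S v = 2) ∧
  ∀ v, G.incCount S v ≠ 0 → G.ConnectsVia S a v

/-- `{f, l}` is an edge of the vertex cover instance `Ḡ` (w.r.t. the tree `T`):
`f ∉ T`, `l ≠ f` lies on the cycle closed by `f`, both are non-trivial, and
their intervals intersect. -/
def VCEdge (T : Finset G.E) (f l : G.E) : Prop :=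
  f ∉ T ∧ l ≠ f ∧ G.NontrivialEdge f ∧ G.NontrivialEdge l ∧
  (∃ C, G.IsCycleOf T f C ∧ l ∈ C) ∧ (G.I f ∩ G.I l).Nonempty

/-- Adjacency in the vertex cover instance `Ḡ` (symmetrized). -/
def VCAdj (T : Finset G.E) (a b : G.E) : Prop := G.VCEdge T a b ∨ G.VCEdge T b a

/-- `S` is a vertex cover of the vertex cover instance `Ḡ`. -/
def IsVCCover (T S : Finset G.E) : Prop :=
  ∀ a b, G.VCAdj T a b → a ∈ S ∨ b ∈ S

/-- `S` is a minimum vertex cover of the vertex cover instance `Ḡ`. -/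
def IsMinVC (T S : Finset G.E) : Prop :=
  G.IsVCCover T S ∧ ∀ S', G.IsVCCover T S' → S.card ≤ S'.card

/-- Edge `e` does not occur in the instance anymore: independently of the
remaining uncertainty it can be deleted (some MST avoids it, for every
realization) or contracted (some MST contains it, for every realization). -/
def Removable (e : G.E) : Prop :=
  (∀ wf : G.E → ℝ, (∀ e', wf e' ∈ G.I e') → ∃ T, G.IsMST wf T ∧ e ∉ T) ∨
  (∀ wf : G.E → ℝ, (∀ e', wf e' ∈ G.I e') → ∃ T, G.IsMST wf T ∧ e ∈ T)

end UncGraph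

/-- The instance obtained from `G` by querying the edges of `Q` under true
values `w`: the intervals of queried edges collapse to the revealed values. -/
def UncGraph.restrict (G : UncGraph) (w : G.E → ℝ) (Q : Finset G.E) : UncGraph where
  V := G.V
  E := G.E
  fintV := G.fintV
  fintE := G.fintE
  decV := G.decV
  decE := G.decE
  ends := G.ends
  conn := G.conn
  L := fun e => if e ∈ Q then w e else G.L e
  U := fun e => if e ∈ Q then w e else G.U e
  LU := fun e => by by_cases h : e ∈ Q <;> simp [h, G.LU e]
  pw := fun e => if e ∈ Q then w e else G.pw e
  pw_mem := fun e => by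
    by_cases h : e ∈ Q
    · simp [h]
    · simpa [h] using G.pw_mem e

/-- A deterministic adaptive query algorithm: given the instance and the set of
already queried edges together with the revealed values, it either picks the next
edge to query or stops (`none`).  The lawfulness condition states that the
decision may only depend on the revealed values of already queried edges. -/
structure Algorithm where
  next : ∀ G : UncGraph, Finset G.E → (G.E → ℝ) → Option G.E
  lawful : ∀ (G : UncGraph) (Q : Finset G.E) (w w' : G.E → ℝ),
    (∀ e ∈ Q, w e = w' e) → next G Q w = next G Q w'

namespace Algorithm

/-- The set of edges queried by `A` after `n` steps, on instance `G` with true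
values `w`; the algorithm stops as soon as the queried set is feasible. -/
def runQueries (A : Algorithm) (G : UncGraph) (w : G.E → ℝ) : ℕ → Finset G.E
  | 0 => ∅
  | n + 1 =>
    let Q := A.runQueries G w n
    if G.Feasible w Q then Q
    else
      match A.next G Q w with
      | some e => insert e Q
      | none => Q

/-- The final query set of the run of `A`. -/
def finalQueries (A : Algorithm) (G : UncGraph) (w : G.E → ℝ) : Finset G.E :=
  A.runQueries G w (Fintype.card G.E + 1)

/-- The number of queries made by `A` on instance `G` with true values `w`. -/
def algCost (A : Algorithm) (G : UncGraph) (w : G.E → ℝ) : ℕ :=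
  (A.finalQueries G w).card

/-- `A` solves every instance: it always ends with a feasible query set. -/
def Solves (A : Algorithm) : Prop :=
  ∀ (G : UncGraph) (w : G.E → ℝ), G.Valid w → G.Feasible w (A.finalQueries G w)

/-- `A` is `α`-consistent: on instances with correct predictions it makes at
most `α · |OPT|` queries. -/
def Consistent (A : Algorithm) (α : ℝ) : Prop :=
  ∀ G : UncGraph, (A.algCost G G.pw : ℝ) ≤ α * (G.optCost G.pw : ℝ)

/-- `A` is `β`-robust: it makes at most `β · |OPT|` queries on every instance. -/
def Robust (A : Algorithm) (β : ℝ) : Prop :=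
  ∀ (G : UncGraph) (w : G.E → ℝ), G.Valid w → (A.algCost G w : ℝ) ≤ β * (G.optCost w : ℝ)

/-- Run of a preprocessing algorithm: it stops exactly when `next` returns
`none` (rather than when the queried set is feasible). -/
def runPre (A : Algorithm) (G : UncGraph) (w : G.E → ℝ) : ℕ → Finset G.E
  | 0 => ∅
  | n + 1 =>
    let Q := A.runPre G w n
    match A.next G Q w with
    | some e => insert e Q
    | none => Q

/-- The final query set of a preprocessing run of `A`. -/
def preQueries (A : Algorithm) (G : UncGraph) (w : G.E → ℝ) : Finset G.E :=
  A.runPre G w (Fintype.card G.E + 1)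

end Algorithm
section WitnessLemmas

open Finset

variable {G : UncGraph}

private lemma sym2_rep (z : Sym2 G.V) : ∃ p q, z = s(p, q) :=
  Sym2.ind (fun p q => ⟨p, q, rfl⟩) z

lemma conn_mono {S S' : Finset G.E} (h : S ⊆ S') :
    ∀ {u v : G.V}, G.ConnectsVia S u v → G.ConnectsVia S' u v := by
  intro u v hc
  induction hc with
  | refl => exact .refl
  | tail _ step ih =>
      obtain ⟨e, he, hee⟩ := step
      exact ih.tail ⟨e, h he, hee⟩

lemma conn_symm {S : Finset G.E} {u v : G.V} (h : G.ConnectsVia S u v) :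
    G.ConnectsVia S v u := by
  induction h with
  | refl => exact .refl
  | tail _ step ih =>
      obtain ⟨e, he, hee⟩ := step
      exact Relation.ReflTransGen.head ⟨e, he, by rw [hee, Sym2.eq_swap]⟩ ih

lemma conn_step {S : Finset G.E} {e : G.E} (he : e ∈ S) {p q : G.V}
    (h : G.ends e = s(p, q)) : G.ConnectsVia S p q :=
  Relation.ReflTransGen.single ⟨e, he, h⟩

lemma conn_empty {u v : G.V} (h : G.ConnectsVia (∅ : Finset G.E) u v) : u = v := by
  induction h with
  | refl => rfl
  | tail _ step _ =>
      obtain ⟨e, he, -⟩ := step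
      exact absurd he (Finset.notMem_empty e)

/-- Decompose a connection at a chosen edge `g` (first/last use split). -/
lemma conn_split (g : G.E) {S : Finset G.E} {u v : G.V} (h : G.ConnectsVia S u v) :
    G.ConnectsVia (S.erase g) u v ∨
      ∃ p q, G.ends g = s(p, q) ∧ G.ConnectsVia (S.erase g) u p ∧
        G.ConnectsVia (S.erase g) q v := by
  induction h using Relation.ReflTransGen.head_induction_on with
  | refl => exact .inl .refl
  | head step rest ih =>
      obtain ⟨e, heS, hends⟩ := step
      by_cases heg : e = g
      · subst heg
        rcases ih with ih | ⟨p, q, hpq, h2, h3⟩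
        · exact .inr ⟨_, _, hends, .refl, ih⟩
        · rcases (Sym2.eq_iff.mp (hends.symm.trans hpq)) with ⟨h4, h5⟩ | ⟨h4, h5⟩
          · subst h4; subst h5
            exact .inr ⟨_, _, hends, .refl, h3⟩
          · subst h4; subst h5
            exact .inl h3
      · have hstep : ∃ e' ∈ S.erase g, G.ends e' = s(_, _) :=
          ⟨e, Finset.mem_erase.mpr ⟨heg, heS⟩, hends⟩
        rcases ih with ih | ⟨p, q, hpq, h2, h3⟩
        · exact .inl (Relation.ReflTransGen.head hstep ih)
        · exact .inr ⟨p, q, hpq, Relation.ReflTransGen.head hstep h2, h3⟩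

lemma conn_patch {g : G.E} {S : Finset G.E}
    (hpq : ∀ p q, G.ends g = s(p, q) → G.ConnectsVia (S.erase g) p q)
    {u v : G.V} (h : G.ConnectsVia S u v) : G.ConnectsVia (S.erase g) u v := by
  rcases conn_split g h with h | ⟨p, q, h1, h2, h3⟩
  · exact h
  · exact h2.trans ((hpq p q h1).trans h3)

lemma exists_touch {S : Finset G.E} {u v : G.V} (h : G.ConnectsVia S u v)
    (hne : u ≠ v) : ∃ e ∈ S, u ∈ G.ends e := by
  induction h using Relation.ReflTransGen.head_induction_on with
  | refl => exact absurd rfl hne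
  | head step rest ih =>
      obtain ⟨e, heS, hends⟩ := step
      exact ⟨e, heS, by rw [hends]; exact Sym2.mem_mk_left _ _⟩

lemma chain_cross {S : Finset G.E} {σ : G.V → Prop} :
    ∀ {u v : G.V}, G.ConnectsVia S u v → ¬(σ u ↔ σ v) →
      ∃ e ∈ S, ∃ p q, G.ends e = s(p, q) ∧ ¬(σ p ↔ σ q) := by
  intro u v h
  induction h using Relation.ReflTransGen.head_induction_on with
  | refl => exact fun hσ => absurd Iff.rfl hσ
  | @head x c step rest ih =>
      intro hσ
      obtain ⟨e, heS, hends⟩ := step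
      by_cases hxc : σ x ↔ σ c
      · exact ih (fun hcv => hσ (hxc.trans hcv))
      · exact ⟨e, heS, x, c, hends, hxc⟩

lemma conn_restrict {S₀ : Finset G.E} {p : G.V} :
    ∀ {u v : G.V}, G.ConnectsVia S₀ u v → G.ConnectsVia S₀ p u →
      G.ConnectsVia
        (S₀.filter (fun h => ∀ x y, G.ends h = s(x, y) → G.ConnectsVia S₀ p x)) u v := by
  intro u v h
  induction h using Relation.ReflTransGen.head_induction_on with
  | refl => exact fun _ => .refl
  | @head x c step rest ih =>
      intro hpu
      obtain ⟨e, heS, hends⟩ := step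
      have hpc : G.ConnectsVia S₀ p c := hpu.trans (conn_step heS hends)
      have hcond : ∀ x' y', G.ends e = s(x', y') → G.ConnectsVia S₀ p x' := by
        intro x' y' h'
        rcases Sym2.eq_iff.mp (hends.symm.trans h') with ⟨h1, _⟩ | ⟨_, h2⟩
        · exact h1 ▸ hpu
        · exact h2 ▸ hpc
      exact Relation.ReflTransGen.head ⟨e, Finset.mem_filter.mpr ⟨heS, hcond⟩, hends⟩
        (ih hpc)

section Decomp

variable {S : Finset G.E} {e : G.E} {A : Finset G.V}

/-- One-sided connectivity restriction used in the component decompositions. -/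
lemma side_conn {r s : G.V} (hrs : G.ends e = s(r, s))
    (hns : ¬ G.ConnectsVia (S.erase e) r s)
    (hconn : ∀ u ∈ A, ∀ v ∈ A, G.ConnectsVia S u v) :
    ∀ u ∈ A.filter (fun z => G.ConnectsVia (S.erase e) r z),
      ∀ v ∈ A.filter (fun z => G.ConnectsVia (S.erase e) r z),
        G.ConnectsVia
          ((S.erase e).filter
            (fun h => ∀ x y, G.ends h = s(x, y) → G.ConnectsVia (S.erase e) r x)) u v := by
  intro u hu v hv
  obtain ⟨huA, hru⟩ := Finset.mem_filter.mp hu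
  obtain ⟨hvA, hrv⟩ := Finset.mem_filter.mp hv
  have key : G.ConnectsVia (S.erase e) u v := by
    rcases conn_split e (hconn u huA v hvA) with h | ⟨x, y, hxy, h2, h3⟩
    · exact h
    · rcases Sym2.eq_iff.mp (hrs.symm.trans hxy) with ⟨h4, h5⟩ | ⟨h4, h5⟩
      · subst h4; subst h5
        exact absurd (conn_symm (h3.trans (conn_symm hrv))) hns
      · subst h4; subst h5
        exact absurd (hru.trans h2) hns
  exact conn_restrict key hru

lemma side_endpoints
    (hends : ∀ e' ∈ S, ∀ x y, G.ends e' = s(x, y) → x ∈ A) {r : G.V} :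
    ∀ e' ∈ (S.erase e).filter
        (fun h => ∀ x y, G.ends h = s(x, y) → G.ConnectsVia (S.erase e) r x),
      ∀ x y, G.ends e' = s(x, y) → x ∈
        A.filter (fun z => G.ConnectsVia (S.erase e) r z) := by
  intro e' he' x y hxy
  obtain ⟨he'1, hcond⟩ := Finset.mem_filter.mp he'
  exact Finset.mem_filter.mpr ⟨hends e' (Finset.mem_of_mem_erase he'1) x y hxy,
    hcond x y hxy⟩

lemma decomp (heS : e ∈ S) {p q : G.V} (hpq : G.ends e = s(p, q))
    (hcase : ¬ G.ConnectsVia (S.erase e) p q)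
    (hends : ∀ e' ∈ S, ∀ x y, G.ends e' = s(x, y) → x ∈ A)
    (hconn : ∀ u ∈ A, ∀ v ∈ A, G.ConnectsVia S u v) :
    ∃ (Ap Aq : Finset G.V) (Sp Sq : Finset G.E),
      A.card = Ap.card + Aq.card ∧ (S.erase e).card = Sp.card + Sq.card ∧
      Sp ⊆ S.erase e ∧ Sq ⊆ S.erase e ∧ p ∈ Ap ∧ q ∈ Aq ∧
      (∀ e' ∈ Sp, ∀ x y, G.ends e' = s(x, y) → x ∈ Ap) ∧
      (∀ e' ∈ Sq, ∀ x y, G.ends e' = s(x, y) → x ∈ Aq) ∧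
      (∀ u ∈ Ap, ∀ v ∈ Ap, G.ConnectsVia Sp u v) ∧
      (∀ u ∈ Aq, ∀ v ∈ Aq, G.ConnectsVia Sq u v) := by
  classical
  have hqp : G.ends e = s(q, p) := by rw [hpq, Sym2.eq_swap]
  have hcase' : ¬ G.ConnectsVia (S.erase e) q p := fun h => hcase (conn_symm h)
  have hpA : p ∈ A := hends e heS p q hpq
  have hqA : q ∈ A := hends e heS q p hqp
  set Ap := A.filter (fun z => G.ConnectsVia (S.erase e) p z) with hAp
  set Aq := A.filter (fun z => G.ConnectsVia (S.erase e) q z) with hAq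
  set Sp := (S.erase e).filter
      (fun h => ∀ x y, G.ends h = s(x, y) → G.ConnectsVia (S.erase e) p x) with hSp
  set Sq := (S.erase e).filter
      (fun h => ∀ x y, G.ends h = s(x, y) → G.ConnectsVia (S.erase e) q x) with hSq
  -- side helper
  have hside : ∀ z ∈ A, G.ConnectsVia (S.erase e) p z ∨ G.ConnectsVia (S.erase e) q z := by
    intro z hz
    rcases conn_split e (hconn p hpA z hz) with h | ⟨x, y, hxy, h2, h3⟩
    · exact .inl h
    · rcases Sym2.eq_iff.mp (hpq.symm.trans hxy) with ⟨h4, h5⟩ | ⟨h4, h5⟩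
      · subst h4; subst h5; exact .inr h3
      · subst h4; subst h5; exact absurd h2 hcase
  have hAcover : A = Ap ∪ Aq := by
    apply Finset.Subset.antisymm
    · intro z hz
      rcases hside z hz with h | h
      · exact Finset.mem_union_left _ (Finset.mem_filter.mpr ⟨hz, h⟩)
      · exact Finset.mem_union_right _ (Finset.mem_filter.mpr ⟨hz, h⟩)
    · intro z hz
      rcases Finset.mem_union.mp hz with h | h
      · exact (Finset.mem_filter.mp h).1
      · exact (Finset.mem_filter.mp h).1
  have hAdisj : Disjoint Ap Aq := by
    rw [Finset.disjoint_left]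
    intro z hz1 hz2
    exact hcase (((Finset.mem_filter.mp hz1).2).trans (conn_symm (Finset.mem_filter.mp hz2).2))
  have hScover : S.erase e = Sp ∪ Sq := by
    apply Finset.Subset.antisymm
    · intro h' hh'
      obtain ⟨x, y, hxy⟩ := sym2_rep (G.ends h')
      have hxA : x ∈ A := hends h' (Finset.mem_of_mem_erase hh') x y hxy
      have hyx : G.ConnectsVia (S.erase e) x y := conn_step hh' hxy
      have hcond : ∀ r : G.V, G.ConnectsVia (S.erase e) r x →
          ∀ x' y', G.ends h' = s(x', y') → G.ConnectsVia (S.erase e) r x' := by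
        intro r hrx x' y' h'
        rcases Sym2.eq_iff.mp (hxy.symm.trans h') with ⟨h4, _⟩ | ⟨_, h5⟩
        · exact h4 ▸ hrx
        · exact h5 ▸ (hrx.trans hyx)
      rcases hside x hxA with h | h
      · exact Finset.mem_union_left _ (Finset.mem_filter.mpr ⟨hh', hcond p h⟩)
      · exact Finset.mem_union_right _ (Finset.mem_filter.mpr ⟨hh', hcond q h⟩)
    · intro h' hh'
      rcases Finset.mem_union.mp hh' with h | h
      · exact (Finset.mem_filter.mp h).1
      · exact (Finset.mem_filter.mp h).1
  have hSdisj : Disjoint Sp Sq := by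
    rw [Finset.disjoint_left]
    intro h' hz1 hz2
    obtain ⟨x, y, hxy⟩ := sym2_rep (G.ends h')
    exact hcase (((Finset.mem_filter.mp hz1).2 x y hxy).trans
      (conn_symm ((Finset.mem_filter.mp hz2).2 x y hxy)))
  refine ⟨Ap, Aq, Sp, Sq, ?_, ?_, Finset.filter_subset _ _, Finset.filter_subset _ _,
    Finset.mem_filter.mpr ⟨hpA, .refl⟩, Finset.mem_filter.mpr ⟨hqA, .refl⟩,
    side_endpoints hends, side_endpoints hends,
    side_conn hpq hcase hconn, side_conn hqp hcase' hconn⟩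
  · rw [hAcover, Finset.card_union_of_disjoint hAdisj]
  · rw [hScover, Finset.card_union_of_disjoint hSdisj]

end Decomp

lemma conn_card_bound :
    ∀ (n : ℕ) (S : Finset G.E), S.card ≤ n → ∀ (A : Finset G.V),
      (∀ e ∈ S, ∀ p q, G.ends e = s(p, q) → p ∈ A) →
      (∀ u ∈ A, ∀ v ∈ A, G.ConnectsVia S u v) →
      A.card ≤ S.card + 1 := by
  intro n
  induction n with
  | zero =>
      intro S hS A hends hconn
      have hS0 : S = ∅ := Finset.card_eq_zero.mp (Nat.le_zero.mp hS)
      subst hS0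
      simpa using Finset.card_le_one.mpr (fun a ha b hb => conn_empty (hconn a ha b hb))
  | succ n ih =>
      intro S hS A hends hconn
      rcases Finset.eq_empty_or_nonempty S with rfl | ⟨e, heS⟩
      · simpa using Finset.card_le_one.mpr (fun a ha b hb => conn_empty (hconn a ha b hb))
      obtain ⟨p, q, hpq⟩ := sym2_rep (G.ends e)
      have hcarde : (S.erase e).card = S.card - 1 := Finset.card_erase_of_mem heS
      have hcard1 : 1 ≤ S.card := Finset.card_pos.mpr ⟨e, heS⟩
      by_cases hcase : G.ConnectsVia (S.erase e) p q
      · have hpatch : ∀ u ∈ A, ∀ v ∈ A, G.ConnectsVia (S.erase e) u v := by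
          intro u hu v hv
          refine conn_patch ?_ (hconn u hu v hv)
          intro p' q' h'
          rcases Sym2.eq_iff.mp (hpq.symm.trans h') with ⟨h4, h5⟩ | ⟨h4, h5⟩
          · subst h4; subst h5; exact hcase
          · subst h4; subst h5; exact conn_symm hcase
        have := ih (S.erase e) (by omega) A
          (fun e' he' x y hxy => hends e' (Finset.mem_of_mem_erase he') x y hxy) hpatch
        omega
      · obtain ⟨Ap, Aq, Sp, Sq, hA, hS', hsub1, hsub2, -, -, he1, he2, hc1, hc2⟩ :=
          decomp heS hpq hcase hends hconn
        have hb1 : Ap.card ≤ Sp.card + 1 := by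
          refine ih Sp ?_ Ap he1 hc1
          have := Finset.card_le_card hsub1
          omega
        have hb2 : Aq.card ≤ Sq.card + 1 := by
          refine ih Sq ?_ Aq he2 hc2
          have := Finset.card_le_card hsub2
          omega
        omega

lemma acyclic_card_bound :
    ∀ (n : ℕ) (S : Finset G.E), S.card ≤ n → ∀ (A : Finset G.V), A.Nonempty →
      (∀ e ∈ S, ∀ p q, G.ends e = s(p, q) → ¬ G.ConnectsVia (S.erase e) p q) →
      (∀ e ∈ S, ∀ p q, G.ends e = s(p, q) → p ∈ A) →
      (∀ u ∈ A, ∀ v ∈ A, G.ConnectsVia S u v) →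
      S.card + 1 ≤ A.card := by
  intro n
  induction n with
  | zero =>
      intro S hS A hA hacy hends hconn
      have hS0 : S = ∅ := Finset.card_eq_zero.mp (Nat.le_zero.mp hS)
      subst hS0
      simpa using Finset.card_pos.mpr hA
  | succ n ih =>
      intro S hS A hA hacy hends hconn
      rcases Finset.eq_empty_or_nonempty S with rfl | ⟨e, heS⟩
      · simpa using Finset.card_pos.mpr hA
      obtain ⟨p, q, hpq⟩ := sym2_rep (G.ends e)
      have hcase : ¬ G.ConnectsVia (S.erase e) p q := hacy e heS p q hpq
      have hcarde : (S.erase e).card = S.card - 1 := Finset.card_erase_of_mem heS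
      have hcard1 : 1 ≤ S.card := Finset.card_pos.mpr ⟨e, heS⟩
      obtain ⟨Ap, Aq, Sp, Sq, hAc, hSc, hsub1, hsub2, hp1, hq1, he1, he2, hc1, hc2⟩ :=
        decomp heS hpq hcase hends hconn
      have hacy' : ∀ (Sr : Finset G.E), Sr ⊆ S.erase e →
          ∀ e' ∈ Sr, ∀ x y, G.ends e' = s(x, y) → ¬ G.ConnectsVia (Sr.erase e') x y := by
        intro Sr hsub e' he' x y hxy hcc
        refine hacy e' (Finset.mem_of_mem_erase (hsub he')) x y hxy (conn_mono ?_ hcc)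
        intro z hz
        exact Finset.mem_erase.mpr ⟨(Finset.mem_erase.mp hz).1,
          Finset.mem_of_mem_erase (hsub (Finset.mem_of_mem_erase hz))⟩
      have hb1 : Sp.card + 1 ≤ Ap.card := by
        refine ih Sp ?_ Ap ⟨p, hp1⟩ (hacy' Sp hsub1) he1 hc1
        have := Finset.card_le_card hsub1
        omega
      have hb2 : Sq.card + 1 ≤ Aq.card := by
        refine ih Sq ?_ Aq ⟨q, hq1⟩ (hacy' Sq hsub2) he2 hc2
        have := Finset.card_le_card hsub2
        omega
      omega

lemma st_acy {S : Finset G.E} (hS : G.IsSpanningTree S) :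
    ∀ g ∈ S, ∀ p q, G.ends g = s(p, q) → ¬ G.ConnectsVia (S.erase g) p q := by
  intro g hg p q hpq hcc
  have hall : ∀ u ∈ (Finset.univ : Finset G.V), ∀ v ∈ (Finset.univ : Finset G.V),
      G.ConnectsVia (S.erase g) u v := by
    intro u _ v _
    refine conn_patch ?_ (hS.1 u v)
    intro p' q' h'
    rcases Sym2.eq_iff.mp (hpq.symm.trans h') with ⟨h4, h5⟩ | ⟨h4, h5⟩
    · subst h4; subst h5; exact hcc
    · subst h4; subst h5; exact conn_symm hcc
  have hb := conn_card_bound (S.erase g).card (S.erase g) le_rfl Finset.univ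
    (fun _ _ p' _ _ => Finset.mem_univ p') hall
  have h1 : (S.erase g).card = S.card - 1 := Finset.card_erase_of_mem hg
  have h2 : 1 ≤ S.card := Finset.card_pos.mpr ⟨g, hg⟩
  have h3 : S.card + 1 = Fintype.card G.V := hS.2
  rw [Finset.card_univ] at hb
  omega

lemma two_comp {S : Finset G.E} (hS : G.IsSpanningTree S) {g : G.E} (hg : g ∈ S)
    {p q : G.V} (hpq : G.ends g = s(p, q)) (z : G.V) :
    G.ConnectsVia (S.erase g) p z ∨ G.ConnectsVia (S.erase g) q z := by
  rcases conn_split g (hS.1 p z) with h | ⟨x, y, hxy, h2, h3⟩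
  · exact .inl h
  · rcases Sym2.eq_iff.mp (hpq.symm.trans hxy) with ⟨h4, h5⟩ | ⟨h4, h5⟩
    · subst h4; subst h5; exact .inr h3
    · subst h4; subst h5; exact absurd h2 (st_acy hS g hg p q hpq)

lemma st_swap {S : Finset G.E} (hS : G.IsSpanningTree S) {e a : G.E}
    (he : e ∈ S) (ha : a ∉ S)
    (hx : ∀ p q, G.ends a = s(p, q) → ¬ G.ConnectsVia (S.erase e) p q) :
    G.IsSpanningTree (insert a (S.erase e)) := by
  obtain ⟨pe, qe, hpe⟩ := sym2_rep (G.ends e)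
  obtain ⟨pa, qa, hpa⟩ := sym2_rep (G.ends a)
  have hsub : S.erase e ⊆ insert a (S.erase e) := Finset.subset_insert _ _
  have hnc : ¬ G.ConnectsVia (S.erase e) pa qa := hx pa qa hpa
  have hstep : G.ConnectsVia (insert a (S.erase e)) pa qa :=
    conn_step (Finset.mem_insert_self a _) hpa
  have hkey : G.ConnectsVia (insert a (S.erase e)) pe qe := by
    rcases two_comp hS he hpe pa with h1 | h1 <;> rcases two_comp hS he hpe qa with h2 | h2
    · exact absurd ((conn_symm h1).trans h2) hnc
    · exact (conn_mono hsub h1).trans (hstep.trans (conn_mono hsub (conn_symm h2)))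
    · exact (conn_mono hsub h2).trans ((conn_symm hstep).trans (conn_mono hsub (conn_symm h1)))
    · exact absurd ((conn_symm h1).trans h2) hnc
  constructor
  · intro u v
    rcases conn_split e (hS.1 u v) with h | ⟨x, y, hxy, h2, h3⟩
    · exact conn_mono hsub h
    · have hxy' : G.ConnectsVia (insert a (S.erase e)) x y := by
        rcases Sym2.eq_iff.mp (hpe.symm.trans hxy) with ⟨h4, h5⟩ | ⟨h4, h5⟩
        · subst h4; subst h5; exact hkey
        · subst h4; subst h5; exact conn_symm hkey
      exact (conn_mono hsub h2).trans (hxy'.trans (conn_mono hsub h3))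
  · have h1 : a ∉ S.erase e := fun hh => ha (Finset.mem_of_mem_erase hh)
    rw [Finset.card_insert_of_notMem h1, Finset.card_erase_of_mem he]
    have h2 : 1 ≤ S.card := Finset.card_pos.mpr ⟨e, he⟩
    have h3 : S.card + 1 = Fintype.card G.V := hS.2
    omega

private lemma even_sum_odd {α : Type*} [DecidableEq α] :
    ∀ (s : Finset α) (f : α → ℕ), (∀ i ∈ s, Odd (f i)) →
      (Even (∑ i ∈ s, f i) ↔ Even s.card) := by
  intro s
  induction s using Finset.induction_on with
  | empty => simp
  | @insert a s ha ih =>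
      intro f hodd
      rw [Finset.sum_insert ha, Finset.card_insert_of_notMem ha]
      have h1 : ¬ Even (f a) := Nat.not_even_iff_odd.mpr (hodd a (Finset.mem_insert_self a s))
      have h2 := ih f (fun i hi => hodd i (Finset.mem_insert_of_mem hi))
      rw [Nat.even_add, Nat.even_add_one, ← h2]
      tauto

/-- Inner count: number of endpoints of `e` lying in the `σ`-side (loops twice). -/
private def innerCnt (G : UncGraph) (σ : G.V → Prop) (e : G.E) : ℕ :=
  ∑ z ∈ Finset.univ.filter σ,
    (if G.ends e = s(z, z) then 2 else if z ∈ G.ends e then 1 else 0)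

private lemma innerCnt_eval {σ : G.V → Prop} {e : G.E} {x y : G.V}
    (hxy : G.ends e = s(x, y)) (hne : x ≠ y) :
    innerCnt G σ e = (if σ x then 1 else 0) + (if σ y then 1 else 0) := by
  classical
  unfold innerCnt
  have h1 : ∀ z : G.V, (if G.ends e = s(z, z) then 2 else if z ∈ G.ends e then 1 else 0)
      = (if z = x then 1 else 0) + (if z = y then 1 else 0) := by
    intro z
    have hloop : ¬ (G.ends e = s(z, z)) := by
      rw [hxy]
      intro h
      rcases Sym2.eq_iff.mp h with ⟨h4, h5⟩ | ⟨h4, h5⟩ <;> exact hne (h4.trans h5.symm)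
    rw [if_neg hloop, hxy]
    simp only [Sym2.mem_iff]
    by_cases h4 : z = x <;> by_cases h5 : z = y
    · exact absurd (h4.symm.trans h5) hne
    · simp [h4, h5, hne]
    · simp [h4, h5, Ne.symm hne]
    · simp [h4, h5]
  rw [Finset.sum_congr rfl (fun z _ => h1 z), Finset.sum_add_distrib,
    Finset.sum_ite_eq' _ x (fun _ => 1), Finset.sum_ite_eq' _ y (fun _ => 1)]
  simp [Finset.mem_filter]

private lemma innerCnt_loop {σ : G.V → Prop} {e : G.E} {x : G.V}
    (hxy : G.ends e = s(x, x)) : Even (innerCnt G σ e) := by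
  classical
  unfold innerCnt
  refine even_iff_two_dvd.mpr (Finset.dvd_sum ?_)
  intro z hz
  by_cases h : G.ends e = s(z, z)
  · simp [h]
  · have : z ∉ G.ends e := by
      rw [hxy, Sym2.mem_iff]
      intro hh
      apply h
      rw [hxy]
      rcases hh with rfl | rfl <;> rfl
    simp [h, this]

/-- Parity: a set with all even degrees crosses any vertex predicate evenly often. -/
lemma even_cross {C : Finset G.E}
    (hdeg : ∀ z, G.incCount C z = 0 ∨ G.incCount C z = 2) (σ : G.V → Prop) :
    Even ((C.filter (fun e => ∀ x y, G.ends e = s(x, y) → ¬(σ x ↔ σ y))).card) := by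
  classical
  have hsum : ∑ z ∈ Finset.univ.filter σ, G.incCount C z = ∑ e ∈ C, innerCnt G σ e := by
    unfold UncGraph.incCount innerCnt
    exact Finset.sum_comm
  have heven : Even (∑ e ∈ C, innerCnt G σ e) := by
    rw [← hsum]
    refine even_iff_two_dvd.mpr (Finset.dvd_sum ?_)
    intro z _
    rcases hdeg z with h | h <;> simp [h]
  rw [← Finset.sum_filter_add_sum_filter_not C
    (fun e => ∀ x y, G.ends e = s(x, y) → ¬(σ x ↔ σ y)) (innerCnt G σ)] at heven
  have hodd : ∀ e ∈ C.filter (fun e => ∀ x y, G.ends e = s(x, y) → ¬(σ x ↔ σ y)),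
      Odd (innerCnt G σ e) := by
    intro e he
    obtain ⟨heC, hcr⟩ := Finset.mem_filter.mp he
    obtain ⟨x, y, hxy⟩ := sym2_rep (G.ends e)
    have hne : x ≠ y := by
      intro h
      subst h
      exact hcr x x hxy Iff.rfl
    rw [innerCnt_eval hxy hne]
    have := hcr x y hxy
    by_cases h4 : σ x <;> by_cases h5 : σ y
    · exact absurd (iff_of_true h4 h5) this
    · simp [h4, h5]
    · simp [h4, h5]
    · exact absurd (iff_of_false h4 h5) this
  have heven2 : Even (∑ e ∈ C.filter (fun e => ¬ ∀ x y, G.ends e = s(x, y) → ¬(σ x ↔ σ y)),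
      innerCnt G σ e) := by
    refine even_iff_two_dvd.mpr (Finset.dvd_sum ?_)
    intro e he
    obtain ⟨heC, hcr⟩ := Finset.mem_filter.mp he
    push_neg at hcr
    obtain ⟨x, y, hxy, hiff⟩ := hcr
    by_cases hne : x = y
    · subst hne
      exact even_iff_two_dvd.mp (innerCnt_loop hxy)
    · rw [innerCnt_eval hxy hne]
      by_cases h4 : σ x <;> by_cases h5 : σ y <;> simp_all
  have hoddsum : Even (∑ e ∈ C.filter (fun e => ∀ x y, G.ends e = s(x, y) → ¬(σ x ↔ σ y)),
      innerCnt G σ e) := by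
    rcases heven with ⟨k, hk⟩
    rcases heven2 with ⟨m, hm⟩
    exact ⟨k - m, by omega⟩
  exact (even_sum_odd _ _ hodd).mp hoddsum

/-- Crossing an edge-cut of a spanning tree: parity argument selects a second crossing
edge of any cycle through `g`. -/
lemma parx {S : Finset G.E} (hS : G.IsSpanningTree S) {g : G.E} (hg : g ∈ S)
    {C : Finset G.E} (hdeg : ∀ z, G.incCount C z = 0 ∨ G.incCount C z = 2) (hgC : g ∈ C) :
    ∃ h ∈ C, h ≠ g ∧ ∀ p q, G.ends h = s(p, q) → ¬ G.ConnectsVia (S.erase g) p q := by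
  classical
  obtain ⟨p₀, q₀, hp₀⟩ := sym2_rep (G.ends g)
  set σ : G.V → Prop := fun z => G.ConnectsVia (S.erase g) p₀ z with hσ
  have hxng_to_cross : ∀ e : G.E, (∀ p q, G.ends e = s(p, q) → ¬ G.ConnectsVia (S.erase g) p q) →
      ∀ x y, G.ends e = s(x, y) → ¬(σ x ↔ σ y) := by
    intro e hXng x y hxy hiff
    have hnc : ¬ G.ConnectsVia (S.erase g) x y := hXng x y hxy
    by_cases hσx : σ x
    · exact hnc ((conn_symm hσx).trans (hiff.mp hσx))
    · have hσy : ¬ σ y := fun h => hσx (hiff.mpr h)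
      have h1 : G.ConnectsVia (S.erase g) q₀ x := by
        rcases two_comp hS hg hp₀ x with h | h
        · exact absurd h hσx
        · exact h
      have h2 : G.ConnectsVia (S.erase g) q₀ y := by
        rcases two_comp hS hg hp₀ y with h | h
        · exact absurd h hσy
        · exact h
      exact hnc ((conn_symm h1).trans h2)
  have hcross_to_xng : ∀ e : G.E, (∀ x y, G.ends e = s(x, y) → ¬(σ x ↔ σ y)) →
      ∀ p q, G.ends e = s(p, q) → ¬ G.ConnectsVia (S.erase g) p q := by
    intro e hcr p q hpq hcc
    exact hcr p q hpq ⟨fun h => h.trans hcc, fun h => h.trans (conn_symm hcc)⟩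
  have hgcross : g ∈ C.filter (fun e => ∀ x y, G.ends e = s(x, y) → ¬(σ x ↔ σ y)) :=
    Finset.mem_filter.mpr ⟨hgC, hxng_to_cross g (st_acy hS g hg)⟩
  have heven := even_cross hdeg σ
  have hlt : 1 < (C.filter (fun e => ∀ x y, G.ends e = s(x, y) → ¬(σ x ↔ σ y))).card := by
    have h1 : 0 < (C.filter (fun e => ∀ x y, G.ends e = s(x, y) → ¬(σ x ↔ σ y))).card :=
      Finset.card_pos.mpr ⟨g, hgcross⟩
    rcases heven with ⟨k, hk⟩
    omega
  obtain ⟨h, hh, hhg⟩ := Finset.exists_mem_ne hlt g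
  obtain ⟨hhC, hcr⟩ := Finset.mem_filter.mp hh
  exact ⟨h, hhC, hhg, hcross_to_xng h hcr⟩

/-- In an acyclic edge set, a connection between vertices on opposite sides of a
vertex predicate passes through a crossing edge whose removal disconnects them. -/
lemma exists_crossing_bridge {σ : G.V → Prop} :
    ∀ S : Finset G.E,
      (∀ h ∈ S, ∀ p q, G.ends h = s(p, q) → ¬ G.ConnectsVia (S.erase h) p q) →
      ∀ u v : G.V, ¬(σ u ↔ σ v) → G.ConnectsVia S u v →
      ∃ g ∈ S, (∃ p q, G.ends g = s(p, q) ∧ ¬(σ p ↔ σ q)) ∧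
        ¬ G.ConnectsVia (S.erase g) u v := by
  intro S
  induction S using Finset.strongInduction with
  | _ S ih =>
    intro hacy u v hσ hconn
    obtain ⟨g, hgS, p, q, hgpq, hcross⟩ := chain_cross hconn hσ
    by_cases hb : G.ConnectsVia (S.erase g) u v
    · have hssub : S.erase g ⊂ S := Finset.erase_ssubset hgS
      have hacy' : ∀ h ∈ S.erase g, ∀ x y, G.ends h = s(x, y) →
          ¬ G.ConnectsVia ((S.erase g).erase h) x y := by
        intro h hh x y hxy hcc
        refine hacy h (Finset.mem_of_mem_erase hh) x y hxy (conn_mono ?_ hcc)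
        intro z hz
        exact Finset.mem_erase.mpr ⟨(Finset.mem_erase.mp hz).1,
          Finset.mem_of_mem_erase (Finset.mem_of_mem_erase hz)⟩
      obtain ⟨g', hg', hcross', hnc'⟩ := ih (S.erase g) hssub hacy' u v hσ hb
      refine ⟨g', Finset.mem_of_mem_erase hg', hcross', ?_⟩
      intro hc
      have hcomm : (S.erase g').erase g = (S.erase g).erase g' := Finset.erase_right_comm
      rcases conn_split g hc with h | ⟨x, y, hab, h2, h3⟩
      · rw [hcomm] at h; exact hnc' h
      · rw [hcomm] at h2 h3
        have hab_cross : ¬ (σ x ↔ σ y) := by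
          rcases Sym2.eq_iff.mp (hgpq.symm.trans hab) with ⟨h4, h5⟩ | ⟨h4, h5⟩
          · subst h4; subst h5; exact hcross
          · subst h4; subst h5; exact fun hh => hcross hh.symm
        rcases conn_split g' hb with h | ⟨c, d, hcd, h4, h5⟩
        · exact hnc' h
        · have hDsub : (S.erase g).erase g' ⊆ S.erase g := Finset.erase_subset _ _
          have hac : G.ConnectsVia ((S.erase g).erase g') x u := conn_symm h2
          have hdb : G.ConnectsVia ((S.erase g).erase g') d y := h5.trans (conn_symm h3)
          have hconn_xy : G.ConnectsVia (S.erase g) x y :=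
            (conn_mono hDsub (hac.trans h4)).trans
              ((conn_step hg' hcd).trans (conn_mono hDsub hdb))
          exact hacy g hgS x y hab hconn_xy
    · exact ⟨g, hgS, ⟨p, q, hgpq, hcross⟩, hb⟩

lemma inc_pos {M : Finset G.E} {e : G.E} (he : e ∈ M) {z : G.V} (hz : z ∈ G.ends e) :
    1 ≤ G.incCount M z := by
  have h1 : 1 ≤ (if G.ends e = s(z, z) then 2 else if z ∈ G.ends e then 1 else 0) := by
    by_cases h2 : G.ends e = s(z, z)
    · simp [h2]
    · simp [h2, hz]
  unfold UncGraph.incCount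
  exact h1.trans (Finset.single_le_sum
    (f := fun e => if G.ends e = s(z, z) then 2 else if z ∈ G.ends e then 1 else 0)
    (fun i _ => Nat.zero_le _) he)

lemma inc_two {M : Finset G.E} {e₁ e₂ : G.E} (h1 : e₁ ∈ M) (h2 : e₂ ∈ M)
    (hne : e₁ ≠ e₂) {z : G.V} (hz1 : z ∈ G.ends e₁) (hz2 : z ∈ G.ends e₂) :
    2 ≤ G.incCount M z := by
  have hterm : ∀ e : G.E, z ∈ G.ends e →
      1 ≤ (if G.ends e = s(z, z) then 2 else if z ∈ G.ends e then 1 else 0) := by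
    intro e hz
    by_cases ha : G.ends e = s(z, z)
    · simp [ha]
    · simp [ha, hz]
  have hsub : ({e₁, e₂} : Finset G.E) ⊆ M := by
    intro x hx
    rcases Finset.mem_insert.mp hx with rfl | hx
    · exact h1
    · rw [Finset.mem_singleton.mp hx]; exact h2
  have hsum2 : 2 ≤ ∑ x ∈ ({e₁, e₂} : Finset G.E),
      (if G.ends x = s(z, z) then 2 else if z ∈ G.ends x then 1 else 0) := by
    rw [Finset.sum_pair hne]
    have := hterm e₁ hz1
    have := hterm e₂ hz2
    omega
  unfold UncGraph.incCount
  exact hsum2.trans (Finset.sum_le_sum_of_subset hsub)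

/-- Between two distinct connected vertices there is a simple path. -/
lemma exists_path {S : Finset G.E} {a b : G.V} (hab : a ≠ b)
    (hconn : G.ConnectsVia S a b) :
    ∃ M ⊆ S, G.ConnectsVia M a b ∧ G.incCount M a = 1 ∧ G.incCount M b = 1 ∧
      (∀ z, z ≠ a → z ≠ b → G.incCount M z = 0 ∨ G.incCount M z = 2) ∧
      (∀ z, G.incCount M z ≠ 0 → G.ConnectsVia M a z) := by
  classical
  obtain ⟨M, hMmem, hMmin⟩ := Finset.exists_min_image
    ((S.powerset).filter (fun M => G.ConnectsVia M a b)) Finset.card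
    ⟨S, Finset.mem_filter.mpr ⟨Finset.mem_powerset_self S, hconn⟩⟩
  obtain ⟨hMS, hMconn⟩ := Finset.mem_filter.mp hMmem
  rw [Finset.mem_powerset] at hMS
  have hess : ∀ h ∈ M, ¬ G.ConnectsVia (M.erase h) a b := by
    intro h hh hcc
    have h1 := hMmin (M.erase h) (Finset.mem_filter.mpr
      ⟨Finset.mem_powerset.mpr ((Finset.erase_subset _ _).trans hMS), hcc⟩)
    have h2 : (M.erase h).card = M.card - 1 := Finset.card_erase_of_mem hh
    have h3 : 1 ≤ M.card := Finset.card_pos.mpr ⟨h, hh⟩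
    omega
  have hacy : ∀ h ∈ M, ∀ p q, G.ends h = s(p, q) → ¬ G.ConnectsVia (M.erase h) p q := by
    intro h hh p q hpq hcc
    refine hess h hh (conn_patch ?_ hMconn)
    intro p' q' h'
    rcases Sym2.eq_iff.mp (hpq.symm.trans h') with ⟨h4, h5⟩ | ⟨h4, h5⟩
    · subst h4; subst h5; exact hcc
    · subst h4; subst h5; exact conn_symm hcc
  have htouch : ∀ h ∈ M, ∀ p q, G.ends h = s(p, q) → G.ConnectsVia M a p := by
    intro h hh p q hpq
    rcases conn_split h hMconn with hcc | ⟨x, y, hxy, h2, h3⟩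
    · exact absurd hcc (hess h hh)
    · have hax : G.ConnectsVia M a x := conn_mono (Finset.erase_subset _ _) h2
      have hay : G.ConnectsVia M a y := hax.trans (conn_step hh hxy)
      rcases Sym2.eq_iff.mp (hxy.symm.trans hpq) with ⟨h4, _⟩ | ⟨_, h5⟩
      · exact h4 ▸ hax
      · exact h5 ▸ hay
  set A := Finset.univ.filter (fun z => G.ConnectsVia M a z) with hA
  have haA : a ∈ A := Finset.mem_filter.mpr ⟨Finset.mem_univ a, .refl⟩
  have hbA : b ∈ A := Finset.mem_filter.mpr ⟨Finset.mem_univ b, hMconn⟩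
  have hendsA : ∀ e ∈ M, ∀ p q, G.ends e = s(p, q) → p ∈ A :=
    fun e he p q hpq => Finset.mem_filter.mpr ⟨Finset.mem_univ p, htouch e he p q hpq⟩
  have hconnA : ∀ u ∈ A, ∀ v ∈ A, G.ConnectsVia M u v := fun u hu v hv =>
    (conn_symm (Finset.mem_filter.mp hu).2).trans (Finset.mem_filter.mp hv).2
  have hcard1 : A.card ≤ M.card + 1 := conn_card_bound M.card M le_rfl A hendsA hconnA
  have hcard2 : M.card + 1 ≤ A.card :=
    acyclic_card_bound M.card M le_rfl A ⟨a, haA⟩ hacy hendsA hconnA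
  have hAcard : A.card = M.card + 1 := le_antisymm hcard1 hcard2
  have hnoloop : ∀ e ∈ M, ∀ x y, G.ends e = s(x, y) → x ≠ y := by
    intro e he x y hxy hcc
    subst hcc
    exact hacy e he x x hxy .refl
  have hmemA : ∀ z, G.incCount M z ≠ 0 → z ∈ A := by
    intro z hz
    unfold UncGraph.incCount at hz
    obtain ⟨e, he, hterm⟩ := Finset.exists_ne_zero_of_sum_ne_zero hz
    have hzends : z ∈ G.ends e := by
      by_cases h1 : G.ends e = s(z, z)
      · rw [h1]; exact Sym2.mem_mk_left _ _
      · by_cases h2 : z ∈ G.ends e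
        · exact h2
        · simp [h1, h2] at hterm
    obtain ⟨x, y, hxy⟩ := sym2_rep (G.ends e)
    rcases Sym2.mem_iff.mp (by rw [hxy] at hzends; exact hzends) with rfl | rfl
    · exact hendsA e he z y hxy
    · exact hendsA e he z x (by rw [hxy, Sym2.eq_swap])
  have hdegsumU : ∑ z ∈ Finset.univ, G.incCount M z = 2 * M.card := by
    have h0 : ∑ z ∈ Finset.univ, G.incCount M z = ∑ e ∈ M, innerCnt G (fun _ => True) e := by
      unfold UncGraph.incCount innerCnt
      rw [Finset.filter_true]
      exact Finset.sum_comm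
    rw [h0, Finset.sum_congr rfl (fun e he => ?_), Finset.sum_const, smul_eq_mul, mul_comm]
    obtain ⟨x, y, hxy⟩ := sym2_rep (G.ends e)
    rw [innerCnt_eval hxy (hnoloop e he x y hxy)]
    simp
  have hdegsumA : ∑ z ∈ A, G.incCount M z = 2 * M.card := by
    rw [← hdegsumU]
    exact Finset.sum_subset (Finset.subset_univ A)
      (fun z _ hz => by by_contra hzz; exact hz (hmemA z hzz))
  have hdeg_a : 1 ≤ G.incCount M a := by
    obtain ⟨e, he, hz⟩ := exists_touch hMconn hab
    exact inc_pos he hz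
  have hdeg_b : 1 ≤ G.incCount M b := by
    obtain ⟨e, he, hz⟩ := exists_touch (conn_symm hMconn) (Ne.symm hab)
    exact inc_pos he hz
  have hdeg_int : ∀ z, z ∈ A → z ≠ a → z ≠ b → 2 ≤ G.incCount M z := by
    intro z hz hza hzb
    have haz : G.ConnectsVia M a z := (Finset.mem_filter.mp hz).2
    obtain ⟨h, hhM, hzh⟩ := exists_touch (conn_symm haz) hza
    by_contra hlt
    have hone : G.incCount M z = 1 := by
      have := inc_pos hhM hzh
      omega
    have hrest : ∀ e ∈ M, e ≠ h → z ∉ G.ends e := by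
      intro e he hne hze
      have := inc_two he hhM hne hze hzh
      omega
    rcases conn_split h hMconn with hcc | ⟨x, y, hxy, h2, h3⟩
    · exact hess h hhM hcc
    · rcases Sym2.mem_iff.mp (by rw [hxy] at hzh; exact hzh) with rfl | rfl
      · obtain ⟨e, he, hze⟩ := exists_touch (conn_symm h2) hza
        exact hrest e (Finset.mem_of_mem_erase he) (Finset.mem_erase.mp he).1 hze
      · obtain ⟨e, he, hze⟩ := exists_touch h3 hzb
        exact hrest e (Finset.mem_of_mem_erase he) (Finset.mem_erase.mp he).1 hze
  have hbA' : b ∈ A.erase a := Finset.mem_erase.mpr ⟨Ne.symm hab, hbA⟩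
  set I := (A.erase a).erase b with hI
  have hM1 : 1 ≤ M.card := by
    obtain ⟨e, he, -⟩ := exists_touch hMconn hab
    exact Finset.card_pos.mpr ⟨e, he⟩
  have hIcard : I.card = M.card - 1 := by
    rw [hI, Finset.card_erase_of_mem hbA', Finset.card_erase_of_mem haA, hAcard]
    omega
  have hImem : ∀ z ∈ I, z ∈ A ∧ z ≠ a ∧ z ≠ b := by
    intro z hz
    obtain ⟨hzb, hz'⟩ := Finset.mem_erase.mp hz
    obtain ⟨hza, hzA⟩ := Finset.mem_erase.mp hz'
    exact ⟨hzA, hza, hzb⟩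
  have hsplit : ∑ z ∈ A, G.incCount M z
      = G.incCount M a + (G.incCount M b + ∑ z ∈ I, G.incCount M z) := by
    rw [← Finset.add_sum_erase _ _ haA, ← Finset.add_sum_erase _ _ hbA']
  have hIbound : 2 * I.card ≤ ∑ z ∈ I, G.incCount M z := by
    calc 2 * I.card = ∑ _z ∈ I, 2 := by rw [Finset.sum_const, smul_eq_mul, mul_comm]
    _ ≤ ∑ z ∈ I, G.incCount M z := Finset.sum_le_sum
        (fun z hz => (hdeg_int z (hImem z hz).1 (hImem z hz).2.1 (hImem z hz).2.2))
  have hab1 : G.incCount M a = 1 ∧ G.incCount M b = 1 := by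
    constructor <;> omega
  have hIexact : ∀ z ∈ I, G.incCount M z = 2 := by
    intro z hz
    by_contra hzz
    have h3 : 3 ≤ G.incCount M z := by
      have := hdeg_int z (hImem z hz).1 (hImem z hz).2.1 (hImem z hz).2.2
      omega
    have hsplit2 : ∑ x ∈ I, G.incCount M x
        = G.incCount M z + ∑ x ∈ I.erase z, G.incCount M x := by
      rw [← Finset.add_sum_erase _ _ hz]
    have hIbound2 : 2 * (I.erase z).card ≤ ∑ x ∈ I.erase z, G.incCount M x := by
      calc 2 * (I.erase z).card = ∑ _x ∈ I.erase z, 2 := by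
            rw [Finset.sum_const, smul_eq_mul, mul_comm]
      _ ≤ _ := Finset.sum_le_sum (fun x hx => by
            have hx' := Finset.mem_of_mem_erase hx
            exact hdeg_int x (hImem x hx').1 (hImem x hx').2.1 (hImem x hx').2.2)
    have hzc : (I.erase z).card = I.card - 1 := Finset.card_erase_of_mem hz
    have : 1 ≤ I.card := Finset.card_pos.mpr ⟨z, hz⟩
    omega
  refine ⟨M, hMS, hMconn, hab1.1, hab1.2, ?_, ?_⟩
  · intro z hza hzb
    by_cases hzA : z ∈ A
    · exact Or.inr (hIexact z (Finset.mem_erase.mpr ⟨hzb, Finset.mem_erase.mpr ⟨hza, hzA⟩⟩))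
    · left
      by_contra hzz
      exact hzA (hmemA z hzz)
  · intro z hz
    exact (Finset.mem_filter.mp (hmemA z hz)).2

/-- Fundamental cycle of a non-tree edge. -/
lemma fund_cycle {T : Finset G.E} (hT : G.IsSpanningTree T) {g : G.E} (hg : g ∉ T)
    {a b : G.V} (hab : G.ends g = s(a, b)) (hne : a ≠ b) :
    ∃ M ⊆ T, G.ConnectsVia M a b ∧ G.IsCycleOf T g (insert g M) := by
  obtain ⟨M, hMT, hMconn, hia, hib, hint, hconnz⟩ := exists_path hne (hT.1 a b)
  have hgM : g ∉ M := fun h => hg (hMT h)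
  have hinc : ∀ z, G.incCount (insert g M) z = (if G.ends g = s(z, z) then 2
      else if z ∈ G.ends g then 1 else 0) + G.incCount M z := by
    intro z
    unfold UncGraph.incCount
    rw [Finset.sum_insert hgM]
  have hgnl : ∀ z, ¬ G.ends g = s(z, z) := by
    intro z h
    rw [hab] at h
    rcases Sym2.eq_iff.mp h with ⟨h4, h5⟩ | ⟨h4, h5⟩ <;> exact hne (h4.trans h5.symm)
  have haend : a ∈ G.ends g := by rw [hab]; exact Sym2.mem_mk_left _ _
  have hbend : b ∈ G.ends g := by rw [hab]; exact Sym2.mem_mk_right _ _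
  refine ⟨M, hMT, hMconn, ⟨⟨g, Finset.mem_insert_self g M⟩, ?_, ?_⟩,
    Finset.mem_insert_self g M, Finset.insert_subset_insert g hMT⟩
  · intro z
    rw [hinc z, if_neg (hgnl z)]
    by_cases hza : z = a
    · subst hza
      rw [if_pos haend, hia]
      omega
    · by_cases hzb : z = b
      · subst hzb
        rw [if_pos hbend, hib]
        omega
      · have hzg : z ∉ G.ends g := by
          rw [hab, Sym2.mem_iff]
          simp [hza, hzb]
        rw [if_neg hzg]
        simpa using hint z hza hzb
  · intro u v hu hv
    have key : ∀ z, G.incCount (insert g M) z ≠ 0 → G.ConnectsVia (insert g M) a z := by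
      intro z hz
      by_cases hzM : G.incCount M z = 0
      · rw [hinc z, if_neg (hgnl z), hzM] at hz
        have hzg : z ∈ G.ends g := by
          by_contra h
          rw [if_neg h] at hz
          omega
        rw [hab, Sym2.mem_iff] at hzg
        rcases hzg with rfl | rfl
        · exact .refl
        · exact conn_step (Finset.mem_insert_self g M) hab
      · exact conn_mono (Finset.subset_insert _ _) (hconnz z hzM)
    exact (conn_symm (key u hu)).trans (key v hv)

private lemma le_of_forall_eps {x y ε₀ : ℝ} (h0 : 0 < ε₀)
    (h : ∀ ε : ℝ, 0 < ε → ε < ε₀ → x ≤ y + ε) : x ≤ y := by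
  by_contra hxy
  push_neg at hxy
  have h1 : 0 < min (ε₀ / 2) ((x - y) / 2) := by
    apply lt_min <;> linarith
  have h2 := h _ h1 (by
    have := min_le_left (ε₀ / 2) ((x - y) / 2)
    linarith)
  have := min_le_right (ε₀ / 2) ((x - y) / 2)
  linarith

lemma valid_lb {w₀ : G.E → ℝ} (hw₀ : G.Valid w₀) (e : G.E) : G.L e ≤ w₀ e := by
  rcases hw₀ e with ⟨h1, h2⟩ | ⟨h1, h2⟩
  · exact le_of_eq h2.symm
  · exact h1.le

lemma valid_ub {w₀ : G.E → ℝ} (hw₀ : G.Valid w₀) (e : G.E) : w₀ e ≤ G.U e := by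
  rcases hw₀ e with ⟨h1, h2⟩ | ⟨h1, h2⟩
  · rw [h2]; exact G.LU e
  · exact h2.le

lemma valid_nt {w₀ : G.E → ℝ} (hw₀ : G.Valid w₀) {e : G.E} (he : G.L e < G.U e) :
    G.L e < w₀ e ∧ w₀ e < G.U e := by
  rcases hw₀ e with ⟨h1, h2⟩ | ⟨h1, h2⟩
  · exact absurd h1 he.ne
  · exact ⟨h1, h2⟩

lemma mem_I_of {e : G.E} {x : ℝ} (h1 : G.L e < x) (h2 : x < G.U e) : x ∈ G.I e :=
  Or.inr ⟨h1, h2⟩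

lemma pw_valid : G.Valid G.pw := fun e => G.pw_mem e

lemma feasible_mono {w₀ : G.E → ℝ} {Q Q' : Finset G.E} (h : G.Feasible w₀ Q)
    (hQQ : Q ⊆ Q') : G.Feasible w₀ Q' := by
  obtain ⟨T₀, hT₀⟩ := h
  exact ⟨T₀, fun wf hc => hT₀ wf ⟨fun e he => hc.1 e (hQQ he), hc.2⟩⟩

lemma mandatory_of_infeasible {w₀ : G.E → ℝ} {e : G.E}
    (h : ¬ G.Feasible w₀ (Finset.univ.erase e)) : G.Mandatory w₀ e := by
  intro Q hQ
  by_contra he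
  refine h (feasible_mono hQ ?_)
  intro x hx
  exact Finset.mem_erase.mpr ⟨fun hxe => he (hxe ▸ hx), Finset.mem_univ x⟩

lemma sum_swap_tree (ρ : G.E → ℝ) {T₀ : Finset G.E} {e a : G.E}
    (he : e ∈ T₀) (ha : a ∉ T₀) :
    ∑ x ∈ insert a (T₀.erase e), ρ x = ∑ x ∈ T₀, ρ x - ρ e + ρ a := by
  rw [Finset.sum_insert (fun h => ha (Finset.mem_of_mem_erase h)),
    Finset.sum_erase_eq_sub he]
  ring

lemma beat {ρ : G.E → ℝ} {T₀ : Finset G.E} (hM : G.IsMST ρ T₀) {e a : G.E}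
    (he : e ∈ T₀) (ha : a ∉ T₀) (hsp : G.IsSpanningTree (insert a (T₀.erase e)))
    (hlt : ρ a < ρ e) : False := by
  have h1 := hM.2 _ hsp
  rw [sum_swap_tree ρ he ha] at h1
  linarith

lemma tspan {T : Finset G.E} (hT : G.UniqueLimitTrees T) : G.IsSpanningTree T := by
  obtain ⟨⟨ε₀, hε₀, hm⟩, -, -, -⟩ := hT
  exact (hm (ε₀ / 2) (by linarith) (by linarith)).1

/-- Red/green optimality relations for the unique limit tree. -/
lemma opt {T : Finset G.E} (hT : G.UniqueLimitTrees T) {e a : G.E}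
    (he : e ∈ T) (ha : a ∉ T)
    (hx : ∀ p q, G.ends a = s(p, q) → ¬ G.ConnectsVia (T.erase e) p q) :
    G.L e ≤ G.L a ∧ G.U e ≤ G.U a ∧
      ¬(G.L e = G.U e ∧ G.L a = G.U a ∧ G.L e = G.L a) := by
  have hsp := st_swap (tspan hT) he ha hx
  obtain ⟨hlow, hup, huniq, -⟩ := hT
  obtain ⟨ε₀, hε₀, hml⟩ := hlow
  obtain ⟨ε₁, hε₁, hmu⟩ := hup
  have hle : ∀ ε : ℝ, 0 < ε → ε < ε₀ → G.lowerWeight ε e ≤ G.lowerWeight ε a := by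
    intro ε h1 h2
    have h3 := (hml ε h1 h2).2 _ hsp
    rw [sum_swap_tree _ he ha] at h3
    linarith
  refine ⟨?_, ?_, ?_⟩
  · refine le_of_forall_eps hε₀ ?_
    intro ε h1 h2
    have h3 := hle ε h1 h2
    unfold UncGraph.lowerWeight at h3
    split_ifs at h3 <;> linarith
  · refine le_of_forall_eps hε₁ ?_
    intro ε h1 h2
    have h3 := (hmu ε h1 h2).2 _ hsp
    rw [sum_swap_tree _ he ha] at h3
    have h4 : G.upperWeight ε e ≤ G.upperWeight ε a := by linarith
    unfold UncGraph.upperWeight at h4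
    split_ifs at h4 <;> linarith
  · rintro ⟨hte, hta, heq⟩
    have hlim : G.IsLowerLimitTree (insert a (T.erase e)) := by
      refine ⟨ε₀, hε₀, fun ε h1 h2 => ⟨hsp, fun T₃ h3 => ?_⟩⟩
      have h4 := (hml ε h1 h2).2 T₃ h3
      rw [sum_swap_tree _ he ha]
      have h5 : G.lowerWeight ε e = G.lowerWeight ε a := by
        unfold UncGraph.lowerWeight
        rw [if_pos hte, if_pos hta, heq]
      linarith
    have heqT := huniq _ hlim
    rw [← heqT] at ha
    exact ha (Finset.mem_insert_self a _)

section Main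

variable {T : Finset G.E} {f li : G.E} {C : Finset G.E}

lemma liT (hC : G.IsCycleOf T f C) (hli : li ∈ C) (hlif : li ≠ f) : li ∈ T := by
  rcases Finset.mem_insert.mp (hC.2.2 hli) with h | h
  · exact absurd h hlif
  · exact h

/-- `f` crosses the cut of every other cycle edge in the tree. -/
lemma cycle_cross (hT : G.UniqueLimitTrees T) (hf : f ∉ T) (hC : G.IsCycleOf T f C)
    {h₀ : G.E} (hh : h₀ ∈ C) (hhf : h₀ ≠ f) :
    ∀ p q, G.ends f = s(p, q) → ¬ G.ConnectsVia (T.erase h₀) p q := by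
  have hhT : h₀ ∈ T := liT hC hh hhf
  obtain ⟨h', hh'C, hh'ne, hX⟩ := parx (tspan hT) hhT hC.1.2.1 hh
  have hh'f : h' = f := by
    by_contra hne
    have hh'T : h' ∈ T := liT hC hh'C hne
    obtain ⟨p, q, hpq⟩ := sym2_rep (G.ends h')
    exact hX p q hpq (conn_step (Finset.mem_erase.mpr ⟨hh'ne, hh'T⟩) hpq)
  exact hh'f ▸ hX

lemma ntf (hT : G.UniqueLimitTrees T) (hf : f ∉ T) (hC : G.IsCycleOf T f C)
    (hli : li ∈ C) (hlif : li ≠ f) (hpf : G.pw f ∈ G.I li) : G.L f < G.U f := by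
  rcases G.pw_mem f with ⟨h3, h4⟩ | ⟨h3, h4⟩
  · obtain ⟨hL, hU, hbte⟩ := opt hT (liT hC hli hlif) hf (cycle_cross hT hf hC hli hlif)
    rcases hpf with ⟨h1, h2⟩ | ⟨h1, h2⟩
    · exact absurd ⟨h1, h3, h2.symm.trans h4⟩ hbte
    · have : G.U li ≤ G.pw f := by rw [h4, h3]; exact hU
      linarith
  · exact h3.trans h4

lemma ntli (hT : G.UniqueLimitTrees T) (hf : f ∉ T) (hC : G.IsCycleOf T f C)
    (hli : li ∈ C) (hlif : li ≠ f) (hpf : G.pw f ∈ G.I li) (hpl : G.pw li ∈ G.I f) :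
    G.L li < G.U li := by
  rcases G.pw_mem li with ⟨h3, h4⟩ | ⟨h3, h4⟩
  · obtain ⟨hL, hU, hbte⟩ := opt hT (liT hC hli hlif) hf (cycle_cross hT hf hC hli hlif)
    rcases hpl with ⟨h1, h2⟩ | ⟨h1, h2⟩
    · exact absurd ⟨h3, h1, h4.symm.trans h2⟩ hbte
    · linarith [h4 ▸ h1]
  · exact h3.trans h4

end Main

section Sel

variable {T : Finset G.E} {f li : G.E} {C : Finset G.E}

lemma xng_of_rep {S₀ : Finset G.E} {a : G.E} {u v : G.V} (hu : G.ends a = s(u, v))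
    (h : ¬ G.ConnectsVia S₀ u v) :
    ∀ p q, G.ends a = s(p, q) → ¬ G.ConnectsVia S₀ p q := by
  intro p q hpq hcc
  rcases Sym2.eq_iff.mp (hu.symm.trans hpq) with ⟨h4, h5⟩ | ⟨h4, h5⟩
  · subst h4; subst h5; exact h hcc
  · subst h4; subst h5; exact h (conn_symm hcc)

lemma cross_xng {S₀ : Finset G.E} {σ : G.V → Prop} {g : G.E}
    (hgcr : ∃ p q, G.ends g = s(p, q) ∧ ¬(σ p ↔ σ q))
    (hσ : ∀ x y, G.ConnectsVia S₀ x y → (σ x ↔ σ y)) :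
    ∀ p q, G.ends g = s(p, q) → ¬ G.ConnectsVia S₀ p q := by
  obtain ⟨p, q, hpq, hcr⟩ := hgcr
  intro p' q' hp'q' hcc
  have hcc' : G.ConnectsVia S₀ p q := by
    rcases Sym2.eq_iff.mp (hpq.symm.trans hp'q') with ⟨h4, h5⟩ | ⟨h4, h5⟩
    · subst h4; subst h5; exact hcc
    · subst h4; subst h5; exact conn_symm hcc
  exact hcr (hσ p q hcc')

lemma sides_ne (hT : G.UniqueLimitTrees T) (hliT : li ∈ T) {u₀ v₀ p q : G.V}
    (hu₀ : G.ends li = s(u₀, v₀)) (hnc : ¬ G.ConnectsVia (T.erase li) p q) :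
    ¬(G.ConnectsVia (T.erase li) u₀ p ↔ G.ConnectsVia (T.erase li) u₀ q) := by
  intro hiff
  by_cases h1 : G.ConnectsVia (T.erase li) u₀ p
  · exact hnc ((conn_symm h1).trans (hiff.mp h1))
  · have h2 : ¬ G.ConnectsVia (T.erase li) u₀ q := fun h => h1 (hiff.mpr h)
    have h3 := (two_comp (tspan hT) hliT hu₀ p).resolve_left h1
    have h4 := (two_comp (tspan hT) hliT hu₀ q).resolve_left h2
    exact hnc ((conn_symm h3).trans h4)

lemma sel_li_in (hT : G.UniqueLimitTrees T) (hf : f ∉ T) (hC : G.IsCycleOf T f C)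
    (hli : li ∈ C) (hlif : li ≠ f)
    (hmaxU : ∀ e ∈ C, e ≠ f → G.U e ≤ G.U li)
    (hpf : G.pw f ∈ G.I li) (hpl : G.pw li ∈ G.I f)
    {T₀ : Finset G.E} (hsp₀ : G.IsSpanningTree T₀) (hliT₀ : li ∈ T₀) :
    ∃ h, h ∉ T₀ ∧ h ≠ li ∧ G.IsSpanningTree (insert h (T₀.erase li)) ∧
      (h = f ∨ (h ≠ f ∧ ∀ w₀ : G.E → ℝ, G.Valid w₀ → w₀ h < G.U li)) := by
  obtain ⟨h, hhC, hhne, hX⟩ := parx hsp₀ hliT₀ hC.1.2.1 hli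
  have hhT₀ : h ∉ T₀ := by
    intro hmem
    obtain ⟨p, q, hpq⟩ := sym2_rep (G.ends h)
    exact hX p q hpq (conn_step (Finset.mem_erase.mpr ⟨hhne, hmem⟩) hpq)
  refine ⟨h, hhT₀, hhne, st_swap hsp₀ hliT₀ hhT₀ hX, ?_⟩
  by_cases hhf : h = f
  · exact Or.inl hhf
  · refine Or.inr ⟨hhf, ?_⟩
    have hhT : h ∈ T := liT hC hhC hhf
    have hUh : G.U h ≤ G.U li := hmaxU h hhC hhf
    intro w₀ hw₀
    rcases lt_or_eq_of_le (G.LU h) with hnt | htr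
    · exact lt_of_lt_of_le (valid_nt hw₀ hnt).2 hUh
    · rcases lt_or_eq_of_le hUh with h1 | h1
      · have := valid_ub hw₀ h
        linarith
      · exfalso
        obtain ⟨hLhf, -, -⟩ := opt hT hhT hf (cycle_cross hT hf hC hhC hhf)
        have hplf : G.L f < G.pw li := by
          rcases hpl with ⟨hh1, hh2⟩ | ⟨hh1, hh2⟩
          · exact absurd hh1 (ntf hT hf hC hli hlif hpf).ne
          · exact hh1
        have hpwli : G.pw li < G.U li :=
          (valid_nt pw_valid (ntli hT hf hC hli hlif hpf hpl)).2
        linarith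

lemma sel_li_out (hT : G.UniqueLimitTrees T) (hf : f ∉ T) (hC : G.IsCycleOf T f C)
    (hli : li ∈ C) (hlif : li ≠ f)
    (hpf : G.pw f ∈ G.I li) (hpl : G.pw li ∈ G.I f)
    {T₀ : Finset G.E} (hsp₀ : G.IsSpanningTree T₀) (hliT₀ : li ∉ T₀) :
    ∃ g ∈ T₀, G.IsSpanningTree (insert li (T₀.erase g)) ∧
      (g = f ∨ (g ≠ f ∧ ∀ w₀ : G.E → ℝ, G.Valid w₀ → G.L li < w₀ g)) := by
  have hliT : li ∈ T := liT hC hli hlif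
  obtain ⟨u₀, v₀, hu₀⟩ := sym2_rep (G.ends li)
  have hσuv : ¬(G.ConnectsVia (T.erase li) u₀ u₀ ↔ G.ConnectsVia (T.erase li) u₀ v₀) :=
    sides_ne hT hliT hu₀ (st_acy (tspan hT) li hliT u₀ v₀ hu₀)
  obtain ⟨g, hgT₀, hgcr, hgnc⟩ := exists_crossing_bridge
    (σ := fun z => G.ConnectsVia (T.erase li) u₀ z) T₀ (st_acy hsp₀) u₀ v₀ hσuv
    (hsp₀.1 u₀ v₀)
  have hgli : g ≠ li := fun h => hliT₀ (h ▸ hgT₀)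
  have hgX : ∀ p q, G.ends g = s(p, q) → ¬ G.ConnectsVia (T.erase li) p q :=
    cross_xng hgcr (fun x y h => ⟨fun hh => hh.trans h, fun hh => hh.trans (conn_symm h)⟩)
  have hsw : G.IsSpanningTree (insert li (T₀.erase g)) :=
    st_swap hsp₀ hgT₀ hliT₀ (xng_of_rep hu₀ hgnc)
  refine ⟨g, hgT₀, hsw, ?_⟩
  by_cases hgf : g = f
  · exact Or.inl hgf
  · refine Or.inr ⟨hgf, ?_⟩
    have hgT : g ∉ T := by
      intro hgT
      obtain ⟨p, q, hpq⟩ := sym2_rep (G.ends g)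
      exact hgX p q hpq (conn_step (Finset.mem_erase.mpr ⟨hgli, hgT⟩) hpq)
    obtain ⟨hL, hU, -⟩ := opt hT hliT hgT hgX
    intro w₀ hw₀
    rcases lt_or_eq_of_le (G.LU g) with hnt | htr
    · exact lt_of_le_of_lt hL (valid_nt hw₀ hnt).1
    · have h1 := valid_lb hw₀ g
      have hntli := ntli hT hf hC hli hlif hpf hpl
      linarith

lemma sel_f_in (hT : G.UniqueLimitTrees T) (hf : f ∉ T) (hC : G.IsCycleOf T f C)
    (hli : li ∈ C) (hlif : li ≠ f) (hpf : G.pw f ∈ G.I li)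
    {T₀ : Finset G.E} (hsp₀ : G.IsSpanningTree T₀) (hfT₀ : f ∈ T₀) :
    ∃ h, h ∉ T₀ ∧ h ≠ f ∧ G.IsSpanningTree (insert h (T₀.erase f)) ∧
      (h = li ∨ (h ≠ li ∧ ∀ w₀ : G.E → ℝ, G.Valid w₀ → w₀ h < G.U f)) := by
  obtain ⟨h, hhC, hhne, hX⟩ := parx hsp₀ hfT₀ hC.1.2.1 hC.2.1
  have hhT₀ : h ∉ T₀ := by
    intro hmem
    obtain ⟨p, q, hpq⟩ := sym2_rep (G.ends h)
    exact hX p q hpq (conn_step (Finset.mem_erase.mpr ⟨hhne, hmem⟩) hpq)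
  refine ⟨h, hhT₀, hhne, st_swap hsp₀ hfT₀ hhT₀ hX, ?_⟩
  by_cases hhli : h = li
  · exact Or.inl hhli
  · refine Or.inr ⟨hhli, ?_⟩
    have hhT : h ∈ T := liT hC hhC hhne
    obtain ⟨hLh, hUh, -⟩ := opt hT hhT hf (cycle_cross hT hf hC hhC hhne)
    have hntf := ntf hT hf hC hli hlif hpf
    intro w₀ hw₀
    rcases lt_or_eq_of_le (G.LU h) with hnt | htr
    · exact lt_of_lt_of_le (valid_nt hw₀ hnt).2 hUh
    · rcases lt_or_eq_of_le hUh with h1 | h1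
      · have := valid_ub hw₀ h
        linarith
      · exfalso
        linarith

lemma sel_f_out (hT : G.UniqueLimitTrees T) (hf : f ∉ T) (hC : G.IsCycleOf T f C)
    (hli : li ∈ C) (hlif : li ≠ f)
    (hpf : G.pw f ∈ G.I li) (hpl : G.pw li ∈ G.I f)
    (hprev : ∀ f', f' ∉ T → f' ≠ f → G.L f' < G.L f →
      ∀ C', G.IsCycleOf T f' C' → ∀ e ∈ C', ¬ G.PredMandatory e)
    (hpm : G.PredMandatory li)
    {T₀ : Finset G.E} (hsp₀ : G.IsSpanningTree T₀) (hfT₀ : f ∉ T₀) :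
    ∃ g ∈ T₀, G.IsSpanningTree (insert f (T₀.erase g)) ∧
      (g = li ∨ (g ≠ li ∧ ∀ w₀ : G.E → ℝ, G.Valid w₀ → G.L f < w₀ g)) := by
  have hliT : li ∈ T := liT hC hli hlif
  obtain ⟨u₀, v₀, hu₀⟩ := sym2_rep (G.ends li)
  obtain ⟨pf, qf, hpfq⟩ := sym2_rep (G.ends f)
  have hcrossf : ¬ G.ConnectsVia (T.erase li) pf qf :=
    cycle_cross hT hf hC hli hlif pf qf hpfq
  obtain ⟨g, hgT₀, hgcr, hgnc⟩ := exists_crossing_bridge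
    (σ := fun z => G.ConnectsVia (T.erase li) u₀ z) T₀ (st_acy hsp₀) pf qf
    (sides_ne hT hliT hu₀ hcrossf) (hsp₀.1 pf qf)
  have hgf : g ≠ f := fun h => hfT₀ (h ▸ hgT₀)
  have hsw : G.IsSpanningTree (insert f (T₀.erase g)) :=
    st_swap hsp₀ hgT₀ hfT₀ (xng_of_rep hpfq hgnc)
  refine ⟨g, hgT₀, hsw, ?_⟩
  by_cases hgli : g = li
  · exact Or.inl hgli
  refine Or.inr ⟨hgli, ?_⟩
  have hgX : ∀ p q, G.ends g = s(p, q) → ¬ G.ConnectsVia (T.erase li) p q :=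
    cross_xng hgcr (fun x y h => ⟨fun hh => hh.trans h, fun hh => hh.trans (conn_symm h)⟩)
  have hgT : g ∉ T := by
    intro hgT
    obtain ⟨p, q, hpq⟩ := sym2_rep (G.ends g)
    exact hgX p q hpq (conn_step (Finset.mem_erase.mpr ⟨hgli, hgT⟩) hpq)
  obtain ⟨hL, hU, -⟩ := opt hT hliT hgT hgX
  have hUliLf : G.L f < G.U li := by
    have h1 : G.L f < G.pw li := by
      rcases hpl with ⟨hh1, hh2⟩ | ⟨hh1, hh2⟩
      · exact absurd hh1 (ntf hT hf hC hli hlif hpf).ne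
      · exact hh1
    have h2 : G.pw li < G.U li :=
      (valid_nt pw_valid (ntli hT hf hC hli hlif hpf hpl)).2
    linarith
  by_cases hLgf : G.L f ≤ G.L g
  · intro w₀ hw₀
    rcases lt_or_eq_of_le (G.LU g) with hnt | htr
    · exact lt_of_le_of_lt hLgf (valid_nt hw₀ hnt).1
    · have h1 := valid_lb hw₀ g
      linarith
  · exfalso
    push_neg at hLgf
    obtain ⟨pg, qg, hpg⟩ := sym2_rep (G.ends g)
    have hpgne : pg ≠ qg := by
      intro h
      exact hgX pg qg hpg (h ▸ Relation.ReflTransGen.refl)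
    obtain ⟨M, hMT, hMconn, hcyc⟩ := fund_cycle (tspan hT) hgT hpg hpgne
    have hliM : li ∈ M := by
      obtain ⟨e₀, he₀M, x, y, hxy, hcr⟩ := chain_cross hMconn
        (sides_ne hT hliT hu₀ (hgX pg qg hpg))
      have hXe₀ : ¬ G.ConnectsVia (T.erase li) x y := fun hcc =>
        hcr ⟨fun h => h.trans hcc, fun h => h.trans (conn_symm hcc)⟩
      have he₀li : e₀ = li := by
        by_contra hne
        exact hXe₀ (conn_step (Finset.mem_erase.mpr ⟨hne, hMT he₀M⟩) hxy)
      exact he₀li ▸ he₀M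
    exact (hprev g hgT hgf hLgf _ hcyc li (Finset.mem_insert_of_mem hliM)) hpm

end Sel

section Inf

variable {T : Finset G.E} {f li : G.E} {C : Finset G.E}

lemma inf_li (hT : G.UniqueLimitTrees T) (hf : f ∉ T) (hC : G.IsCycleOf T f C)
    (hli : li ∈ C) (hlif : li ≠ f)
    (hmaxU : ∀ e ∈ C, e ≠ f → G.U e ≤ G.U li)
    (hpf : G.pw f ∈ G.I li) (hpl : G.pw li ∈ G.I f)
    {w₀ : G.E → ℝ} (hw₀ : G.Valid w₀) (h1 : G.L li < w₀ f) (h2 : w₀ f < G.U li) :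
    ¬ G.Feasible w₀ (Finset.univ.erase li) := by
  rintro ⟨T₀, hver⟩
  have hmst₀ := hver w₀ ⟨fun e _ => rfl, hw₀⟩
  have hsp₀ := hmst₀.1
  have hntli := ntli hT hf hC hli hlif hpf hpl
  have hmk : ∀ y : ℝ, G.L li < y → y < G.U li →
      G.Compatible w₀ (Finset.univ.erase li) (fun e => if e = li then y else w₀ e) := by
    intro y hy1 hy2
    constructor
    · intro e he
      dsimp only
      rw [if_neg (Finset.mem_erase.mp he).1]
    · intro e
      by_cases h : e = li
      · subst h; dsimp only; rw [if_pos rfl]; exact mem_I_of hy1 hy2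
      · dsimp only; rw [if_neg h]; exact hw₀ e
  by_cases hliT₀ : li ∈ T₀
  · obtain ⟨h, hhT₀, hhli, hsw, hcase⟩ :=
      sel_li_in hT hf hC hli hlif hmaxU hpf hpl hsp₀ hliT₀
    have hval : w₀ h < G.U li := by
      rcases hcase with rfl | ⟨-, hb⟩
      · exact h2
      · exact hb w₀ hw₀
    have hm1 := le_max_left (w₀ h) (G.L li)
    have hm2 := le_max_right (w₀ h) (G.L li)
    have hm3 : max (w₀ h) (G.L li) < G.U li := max_lt hval hntli
    set y := (max (w₀ h) (G.L li) + G.U li) / 2 with hy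
    have hy1 : G.L li < y := by rw [hy]; linarith
    have hy2 : y < G.U li := by rw [hy]; linarith
    have hy3 : w₀ h < y := by rw [hy]; linarith
    have hmst := hver _ (hmk y hy1 hy2)
    refine beat hmst hliT₀ hhT₀ hsw ?_
    simp only [if_neg hhli, if_pos rfl]
    exact hy3
  · obtain ⟨g, hgT₀, hsw, hcase⟩ := sel_li_out hT hf hC hli hlif hpf hpl hsp₀ hliT₀
    have hgli : g ≠ li := fun h => hliT₀ (h ▸ hgT₀)
    have hval : G.L li < w₀ g := by
      rcases hcase with rfl | ⟨-, hb⟩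
      · exact h1
      · exact hb w₀ hw₀
    have hm1 := min_le_left (w₀ g) (G.U li)
    have hm2 := min_le_right (w₀ g) (G.U li)
    have hm3 : G.L li < min (w₀ g) (G.U li) := lt_min hval hntli
    set y := (G.L li + min (w₀ g) (G.U li)) / 2 with hy
    have hy1 : G.L li < y := by rw [hy]; linarith
    have hy2 : y < G.U li := by rw [hy]; linarith
    have hy3 : y < w₀ g := by rw [hy]; linarith
    have hmst := hver _ (hmk y hy1 hy2)
    refine beat hmst hgT₀ hliT₀ hsw ?_
    simp only [if_pos rfl, if_neg hgli]
    exact hy3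

lemma pm_li (hT : G.UniqueLimitTrees T) (hf : f ∉ T) (hC : G.IsCycleOf T f C)
    (hli : li ∈ C) (hlif : li ≠ f)
    (hmaxU : ∀ e ∈ C, e ≠ f → G.U e ≤ G.U li)
    (hpf : G.pw f ∈ G.I li) (hpl : G.pw li ∈ G.I f) : G.PredMandatory li := by
  have hntli := ntli hT hf hC hli hlif hpf hpl
  have h1 : G.L li < G.pw f ∧ G.pw f < G.U li := by
    rcases hpf with ⟨hh1, hh2⟩ | h
    · exact absurd hh1 hntli.ne
    · exact h
  exact mandatory_of_infeasible (inf_li hT hf hC hli hlif hmaxU hpf hpl pw_valid h1.1 h1.2)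

lemma inf_f (hT : G.UniqueLimitTrees T) (hf : f ∉ T) (hC : G.IsCycleOf T f C)
    (hli : li ∈ C) (hlif : li ≠ f)
    (hmaxU : ∀ e ∈ C, e ≠ f → G.U e ≤ G.U li)
    (hpf : G.pw f ∈ G.I li) (hpl : G.pw li ∈ G.I f)
    (hprev : ∀ f', f' ∉ T → f' ≠ f → G.L f' < G.L f →
      ∀ C', G.IsCycleOf T f' C' → ∀ e ∈ C', ¬ G.PredMandatory e)
    {w₀ : G.E → ℝ} (hw₀ : G.Valid w₀) (h1 : G.L f < w₀ li) (h2 : w₀ li < G.U f) :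
    ¬ G.Feasible w₀ (Finset.univ.erase f) := by
  rintro ⟨T₀, hver⟩
  have hmst₀ := hver w₀ ⟨fun e _ => rfl, hw₀⟩
  have hsp₀ := hmst₀.1
  have hntf := ntf hT hf hC hli hlif hpf
  have hpm := pm_li hT hf hC hli hlif hmaxU hpf hpl
  have hmk : ∀ x : ℝ, G.L f < x → x < G.U f →
      G.Compatible w₀ (Finset.univ.erase f) (fun e => if e = f then x else w₀ e) := by
    intro x hx1 hx2
    constructor
    · intro e he
      dsimp only
      rw [if_neg (Finset.mem_erase.mp he).1]
    · intro e
      by_cases h : e = f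
      · subst h; dsimp only; rw [if_pos rfl]; exact mem_I_of hx1 hx2
      · dsimp only; rw [if_neg h]; exact hw₀ e
  by_cases hfT₀ : f ∈ T₀
  · obtain ⟨h, hhT₀, hhf, hsw, hcase⟩ := sel_f_in hT hf hC hli hlif hpf hsp₀ hfT₀
    have hval : w₀ h < G.U f := by
      rcases hcase with rfl | ⟨-, hb⟩
      · exact h2
      · exact hb w₀ hw₀
    have hm1 := le_max_left (w₀ h) (G.L f)
    have hm2 := le_max_right (w₀ h) (G.L f)
    have hm3 : max (w₀ h) (G.L f) < G.U f := max_lt hval hntf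
    set x := (max (w₀ h) (G.L f) + G.U f) / 2 with hx
    have hx1 : G.L f < x := by rw [hx]; linarith
    have hx2 : x < G.U f := by rw [hx]; linarith
    have hx3 : w₀ h < x := by rw [hx]; linarith
    have hmst := hver _ (hmk x hx1 hx2)
    refine beat hmst hfT₀ hhT₀ hsw ?_
    simp only [if_neg hhf, if_pos rfl]
    exact hx3
  · obtain ⟨g, hgT₀, hsw, hcase⟩ :=
      sel_f_out hT hf hC hli hlif hpf hpl hprev hpm hsp₀ hfT₀
    have hgf : g ≠ f := fun h => hfT₀ (h ▸ hgT₀)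
    have hval : G.L f < w₀ g := by
      rcases hcase with rfl | ⟨-, hb⟩
      · exact h1
      · exact hb w₀ hw₀
    have hm1 := min_le_left (w₀ g) (G.U f)
    have hm2 := min_le_right (w₀ g) (G.U f)
    have hm3 : G.L f < min (w₀ g) (G.U f) := lt_min hval hntf
    set x := (G.L f + min (w₀ g) (G.U f)) / 2 with hx
    have hx1 : G.L f < x := by rw [hx]; linarith
    have hx2 : x < G.U f := by rw [hx]; linarith
    have hx3 : x < w₀ g := by rw [hx]; linarith
    have hmst := hver _ (hmk x hx1 hx2)
    refine beat hmst hgT₀ hfT₀ hsw ?_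
    simp only [if_pos rfl, if_neg hgf]
    exact hx3

lemma inf_pair {w : G.E → ℝ} (hw : G.Valid w)
    (hT : G.UniqueLimitTrees T) (hf : f ∉ T) (hC : G.IsCycleOf T f C)
    (hli : li ∈ C) (hlif : li ≠ f)
    (hmaxU : ∀ e ∈ C, e ≠ f → G.U e ≤ G.U li)
    (hpf : G.pw f ∈ G.I li) (hpl : G.pw li ∈ G.I f) :
    ¬ G.Feasible w (Finset.univ \ {f, li}) := by
  rintro ⟨T₀, hver⟩
  have hmst₀ := hver w ⟨fun e _ => rfl, hw⟩
  have hsp₀ := hmst₀.1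
  have hntf := ntf hT hf hC hli hlif hpf
  have hntli := ntli hT hf hC hli hlif hpf hpl
  have hflif : f ≠ li := fun h => hlif h.symm
  have hpwl : G.L f < G.pw li ∧ G.pw li < G.U f := by
    rcases hpl with ⟨hh1, hh2⟩ | h
    · exact absurd hh1 hntf.ne
    · exact h
  have hpwl2 := valid_nt pw_valid hntli (e := li)
  have hpwf2 := valid_nt pw_valid hntf (e := f)
  have hmk : ∀ x y : ℝ, x ∈ G.I f → y ∈ G.I li →
      G.Compatible w (Finset.univ \ {f, li})
        (fun e => if e = f then x else if e = li then y else w e) := by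
    intro x y hx hy
    constructor
    · intro e he
      rw [Finset.mem_sdiff] at he
      have h1 : e ≠ f := fun hh => he.2 (by rw [hh]; exact Finset.mem_insert_self _ _)
      have h2 : e ≠ li := fun hh => he.2
        (by rw [hh]; exact Finset.mem_insert_of_mem (Finset.mem_singleton_self _))
      dsimp only
      rw [if_neg h1, if_neg h2]
    · intro e
      by_cases h1 : e = f
      · subst h1; dsimp only; rw [if_pos rfl]; exact hx
      · by_cases h2 : e = li
        · subst h2; dsimp only; rw [if_neg h1, if_pos rfl]; exact hy
        · dsimp only; rw [if_neg h1, if_neg h2]; exact hw e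
  by_cases hliT₀ : li ∈ T₀
  · by_cases hfT₀ : f ∈ T₀
    · obtain ⟨h, hhT₀, hhf, hsw, hcase⟩ := sel_f_in hT hf hC hli hlif hpf hsp₀ hfT₀
      have hhli : h ≠ li := by
        rcases hcase with rfl | ⟨hne, -⟩
        · exact absurd hliT₀ hhT₀
        · exact hne
      have hval : w h < G.U f := by
        rcases hcase with rfl | ⟨-, hb⟩
        · exact absurd hliT₀ hhT₀
        · exact hb w hw
      have hm1 := le_max_left (w h) (G.L f)
      have hm2 := le_max_right (w h) (G.L f)
      have hm3 : max (w h) (G.L f) < G.U f := max_lt hval hntf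
      set x := (max (w h) (G.L f) + G.U f) / 2 with hx
      have hx1 : G.L f < x := by rw [hx]; linarith
      have hx2 : x < G.U f := by rw [hx]; linarith
      have hx3 : w h < x := by rw [hx]; linarith
      have hmst := hver _ (hmk x (G.pw li) (mem_I_of hx1 hx2)
        (mem_I_of hpwl2.1 hpwl2.2))
      refine beat hmst hfT₀ hhT₀ hsw ?_
      simp only [if_neg hhf, if_neg hhli, if_pos rfl]
      exact hx3
    · obtain ⟨h, hhT₀, hhli, hsw, hcase⟩ :=
        sel_li_in hT hf hC hli hlif hmaxU hpf hpl hsp₀ hliT₀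
      rcases hcase with hhf | ⟨hhf, hb⟩
      · rw [hhf] at hhT₀ hsw
        set x := (G.L f + G.pw li) / 2 with hx
        have hx1 : G.L f < x := by rw [hx]; linarith [hpwl.1]
        have hx2 : x < G.pw li := by rw [hx]; linarith [hpwl.1]
        have hmst := hver _ (hmk x (G.pw li) (mem_I_of hx1 (hx2.trans hpwl.2))
          (mem_I_of hpwl2.1 hpwl2.2))
        refine beat hmst hliT₀ hhT₀ hsw ?_
        simpa [hlif] using hx2
      · have hval : w h < G.U li := hb w hw
        have hm1 := le_max_left (w h) (G.L li)
        have hm2 := le_max_right (w h) (G.L li)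
        have hm3 : max (w h) (G.L li) < G.U li := max_lt hval hntli
        set y := (max (w h) (G.L li) + G.U li) / 2 with hy
        have hy1 : G.L li < y := by rw [hy]; linarith
        have hy2 : y < G.U li := by rw [hy]; linarith
        have hy3 : w h < y := by rw [hy]; linarith
        have hmst := hver _ (hmk (G.pw f) y (mem_I_of hpwf2.1 hpwf2.2)
          (mem_I_of hy1 hy2))
        refine beat hmst hliT₀ hhT₀ hsw ?_
        simpa [hlif, hhf, hhli] using hy3
  · obtain ⟨g, hgT₀, hsw, hcase⟩ := sel_li_out hT hf hC hli hlif hpf hpl hsp₀ hliT₀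
    have hgli : g ≠ li := fun h => hliT₀ (h ▸ hgT₀)
    rcases hcase with hgf | ⟨hgf, hb⟩
    · rw [hgf] at hgT₀ hsw
      set x := (G.pw li + G.U f) / 2 with hx
      have hx1 : G.pw li < x := by rw [hx]; linarith [hpwl.2]
      have hx2 : x < G.U f := by rw [hx]; linarith [hpwl.2]
      have hmst := hver _ (hmk x (G.pw li) (mem_I_of (hpwl.1.trans hx1) hx2)
        (mem_I_of hpwl2.1 hpwl2.2))
      refine beat hmst hgT₀ hliT₀ hsw ?_
      simpa [hlif] using hx1
    · have hval : G.L li < w g := hb w hw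
      have hm1 := min_le_left (w g) (G.U li)
      have hm2 := min_le_right (w g) (G.U li)
      have hm3 : G.L li < min (w g) (G.U li) := lt_min hval hntli
      set y := (G.L li + min (w g) (G.U li)) / 2 with hy
      have hy1 : G.L li < y := by rw [hy]; linarith
      have hy2 : y < G.U li := by rw [hy]; linarith
      have hy3 : y < w g := by rw [hy]; linarith
      have hmst := hver _ (hmk (G.pw f) y (mem_I_of hpwf2.1 hpwf2.2)
        (mem_I_of hy1 hy2))
      refine beat hmst hgT₀ hliT₀ hsw ?_
      simpa [hlif, hgf, hgli] using hy3

end Inf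

end WitnessLemmas


/-- in an instance with unique `T_L = T_U`, consider the cycle
`C` closed by `f ∉ T_L` such that all cycles closed by earlier edges (smaller
lower limit) outside `T_L` are prediction mandatory free. If `l` has the highest
upper limit in `C ∖ {f}` and `ŵ_f ∈ I_l` and `ŵ_l ∈ I_f`, then `{f, l}` is a
witness set, and either both `f` and `l` are mandatory or `h→({f, l}) ≥ 1`. -/
theorem strengthened_witness_pair
    (G : UncGraph) (w : G.E → ℝ) (hw : G.Valid w)
    (T : Finset G.E) (hT : G.UniqueLimitTrees T)
    (f : G.E) (hf : f ∉ T)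
    (C : Finset G.E) (hC : G.IsCycleOf T f C)
    (hprev : ∀ f', f' ∉ T → f' ≠ f → G.L f' < G.L f →
      ∀ C', G.IsCycleOf T f' C' → ∀ e ∈ C', ¬ G.PredMandatory e)
    (li : G.E) (hli : li ∈ C) (hlif : li ≠ f)
    (hmaxU : ∀ e ∈ C, e ≠ f → G.U e ≤ G.U li)
    (hpf : G.pw f ∈ G.I li) (hpl : G.pw li ∈ G.I f) :
    G.IsWitnessSet w {f, li} ∧
      ((G.Mandatory w f ∧ G.Mandatory w li) ∨
        1 ≤ G.hright G.pw w f + G.hright G.pw w li) := by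
  classical
  have hinfp := inf_pair hw hT hf hC hli hlif hmaxU hpf hpl
  have hntf := ntf hT hf hC hli hlif hpf
  have hntli := ntli hT hf hC hli hlif hpf hpl
  have hpwf : G.L li < G.pw f ∧ G.pw f < G.U li := by
    rcases hpf with ⟨hh1, hh2⟩ | h
    · exact absurd hh1 hntli.ne
    · exact h
  have hpwl : G.L f < G.pw li ∧ G.pw li < G.U f := by
    rcases hpl with ⟨hh1, hh2⟩ | h
    · exact absurd hh1 hntf.ne
    · exact h
  constructor
  · intro Q hQ
    by_contra hno
    push_neg at hno
    refine hinfp (feasible_mono hQ ?_)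
    intro e he
    rw [Finset.mem_sdiff]
    refine ⟨Finset.mem_univ e, fun hmem => ?_⟩
    exact hno e hmem he
  · by_cases h1 : G.L li < w f ∧ w f < G.U li
    · by_cases h2 : G.L f < w li ∧ w li < G.U f
      · exact Or.inl
          ⟨mandatory_of_infeasible
              (inf_f hT hf hC hli hlif hmaxU hpf hpl hprev hw h2.1 h2.2),
            mandatory_of_infeasible
              (inf_li hT hf hC hli hlif hmaxU hpf hpl hw h1.1 h1.2)⟩
      · right
        have hk : G.kErr G.pw w li f = 1 := by
          unfold UncGraph.kErr
          rw [if_neg ?_]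
          rintro (⟨ha, -⟩ | ⟨ha, -⟩ | ⟨-, -, hb, hc⟩)
          · linarith [hpwl.1]
          · linarith [hpwl.2]
          · exact h2 ⟨hb, hc⟩
        have hge : 1 ≤ G.hright G.pw w li := by
          unfold UncGraph.hright
          rw [← hk]
          exact Finset.single_le_sum (fun i _ => Nat.zero_le _)
            (Finset.mem_erase.mpr ⟨fun h => hlif h.symm, Finset.mem_univ f⟩)
        omega
    · right
      have hk : G.kErr G.pw w f li = 1 := by
        unfold UncGraph.kErr
        rw [if_neg ?_]
        rintro (⟨ha, -⟩ | ⟨ha, -⟩ | ⟨-, -, hb, hc⟩)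
        · linarith [hpwf.1]
        · linarith [hpwf.2]
        · exact h1 ⟨hb, hc⟩
      have hge : 1 ≤ G.hright G.pw w f := by
        unfold UncGraph.hright
        rw [← hk]
        exact Finset.single_le_sum (fun i _ => Nat.zero_le _)
          (Finset.mem_erase.mpr ⟨hlif, Finset.mem_univ li⟩)
      omega
end
end

section
/- Let γ > 2 be a non-integral rational number and let {γ} = γ − ⌊γ⌋ denote its fractional part. Let γ' be a random variable that equals ⌈γ⌉ with probability {γ} and ⌊γ⌋ with probability 1 − {γ}. Then E[γ' + 1] = γ + 1 and E[1/γ'] = 1/γ + {γ}(1 − {γ})/(γ·⌈γ⌉·⌊γ⌋) ≤ 1/γ + 1/48. -/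
/-!
Common framework: the minimum spanning tree problem under explorable
uncertainty with (untrusted) predictions.
-/

open scoped BigOperators
open scoped Classical

noncomputable section

/-! Off the integers `⌈x⌉ = ⌊x⌋ + 1` and `x = ⌊x⌋ + {x}`, so both expectations are rational
identities in `⌊x⌋` and `{x}`; at the integers `{x} = 0` and they are trivial. The error
term is bounded using `{x}(1 - {x}) ≤ 1/4` and `x⌈x⌉⌊x⌋ ≥ 2 · 3 · 2` for `x > 2`. -/

theorem mul_one_sub_le_one_div_four {α : Type*} [Field α] [LinearOrder α]
    [IsStrictOrderedRing α] (t : α) : t * (1 - t) ≤ 1 / 4 := by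
  nlinarith [sq_nonneg (t - 1 / 2)]

section FloorRing

variable {α : Type*} [Field α] [LinearOrder α] [IsStrictOrderedRing α] [FloorRing α]

theorem Int.fract_mul_ceil_add_one_sub_fract_mul_floor (x : α) :
    Int.fract x * ⌈x⌉ + (1 - Int.fract x) * ⌊x⌋ = x := by
  have hfloor : (⌊x⌋ : α) = x - Int.fract x := by rw [Int.self_sub_fract]
  rw [hfloor]
  rcases Int.fract_eq_zero_or_add_one_sub_ceil x with h | h
  · linear_combination ((⌈x⌉ : α) - 1 - x + Int.fract x) * h
  · linear_combination Int.fract x * h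

theorem Int.fract_div_ceil_add_one_sub_fract_div_floor {x : α}
    (hfloor : (⌊x⌋ : α) ≠ 0) (hceil : (⌈x⌉ : α) ≠ 0) :
    Int.fract x * (1 / ⌈x⌉) + (1 - Int.fract x) * (1 / ⌊x⌋)
      = 1 / x + Int.fract x * (1 - Int.fract x) / (x * ⌈x⌉ * ⌊x⌋) := by
  rw [← Int.self_sub_fract] at hfloor ⊢
  rcases Int.fract_eq_zero_or_add_one_sub_ceil x with h | h
  · simp [h]
  · have hx : x ≠ 0 := by
      rintro rfl
      simp at h
    rw [h] at hfloor ⊢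
    field_simp
    ring

theorem Int.fract_mul_one_sub_fract_div_le_one_div_48 {x : α} (hx : 2 < x) :
    Int.fract x * (1 - Int.fract x) / (x * ⌈x⌉ * ⌊x⌋) ≤ 1 / 48 := by
  have hfloor : (2 : α) ≤ ⌊x⌋ := by exact_mod_cast Int.le_floor.2 (by exact_mod_cast hx.le)
  have hceil : (3 : α) ≤ ⌈x⌉ := by
    have : (2 : ℤ) < ⌈x⌉ := Int.lt_ceil.2 (by exact_mod_cast hx)
    exact_mod_cast this
  have hden : (12 : α) ≤ x * ⌈x⌉ * ⌊x⌋ := calc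
    (12 : α) = 2 * 3 * 2 := by norm_num
    _ ≤ x * ⌈x⌉ * ⌊x⌋ := by gcongr
  calc Int.fract x * (1 - Int.fract x) / (x * ⌈x⌉ * ⌊x⌋)
      ≤ (1 / 4) / 12 :=
        div_le_div₀ (by norm_num) (mul_one_sub_le_one_div_four _) (by norm_num) hden
    _ = 1 / 48 := by norm_num

end FloorRing

theorem randomized_gamma_expectations_general
    (γ : ℚ) (h2 : 2 < γ) :
    (Int.fract γ * ((⌈γ⌉ : ℚ) + 1) + (1 - Int.fract γ) * ((⌊γ⌋ : ℚ) + 1)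
        = γ + 1) ∧
    (Int.fract γ * (1 / (⌈γ⌉ : ℚ)) + (1 - Int.fract γ) * (1 / (⌊γ⌋ : ℚ))
        = 1 / γ + Int.fract γ * (1 - Int.fract γ) / (γ * (⌈γ⌉ : ℚ) * (⌊γ⌋ : ℚ))) ∧
    (1 / γ + Int.fract γ * (1 - Int.fract γ) / (γ * (⌈γ⌉ : ℚ) * (⌊γ⌋ : ℚ))
        ≤ 1 / γ + 1 / 48) := by
  have hfloor : 0 < ⌊γ⌋ := Int.floor_pos.2 (by linarith)
  have hceil : 0 < ⌈γ⌉ := Int.ceil_pos.2 (by linarith)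
  refine ⟨?_, ?_, ?_⟩
  · linear_combination Int.fract_mul_ceil_add_one_sub_fract_mul_floor γ
  · exact Int.fract_div_ceil_add_one_sub_fract_div_floor (by positivity) (by positivity)
  · grw [Int.fract_mul_one_sub_fract_div_le_one_div_48 h2]

/-- derandomization arithmetic: for non-integral rational
`γ > 2`, the random variable `γ'` equal to `⌈γ⌉` with probability `{γ}` and to
`⌊γ⌋` with probability `1 − {γ}` satisfies `E[γ' + 1] = γ + 1` and
`E[1/γ'] = 1/γ + {γ}(1 − {γ})/(γ⌈γ⌉⌊γ⌋) ≤ 1/γ + 1/48`. -/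
theorem randomized_gamma_expectations
    (γ : ℚ) (h2 : 2 < γ) (hni : ∀ n : ℤ, (n : ℚ) ≠ γ) :
    (Int.fract γ * ((⌈γ⌉ : ℚ) + 1) + (1 - Int.fract γ) * ((⌊γ⌋ : ℚ) + 1)
        = γ + 1) ∧
    (Int.fract γ * (1 / (⌈γ⌉ : ℚ)) + (1 - Int.fract γ) * (1 / (⌊γ⌋ : ℚ))
        = 1 / γ + Int.fract γ * (1 - Int.fract γ) / (γ * (⌈γ⌉ : ℚ) * (⌊γ⌋ : ℚ))) ∧
    (1 / γ + Int.fract γ * (1 - Int.fract γ) / (γ * (⌈γ⌉ : ℚ) * (⌊γ⌋ : ℚ))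
        ≤ 1 / γ + 1 / 48) :=
  randomized_gamma_expectations_general γ h2
end
end
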